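/- arXiv:2101.00859 — 8 statements merged into one kernel-verified Lean document; each statement's English description precedes it below -/
import Mathlib

section
/- Let q be a prime power, k a divisor of q−1, and a_0,…,a_{k−1} ∈ F_q. The cyclotomic map θ = [a_0,…,a_{k−1}] of index k is an orthomorphism over F_q if and only if the maps C_{k,i} ↦ a_i·C_{k,i} and C_{k,i} ↦ (a_i−1)·C_{k,i} are both well-defined permutations of the set of cyclotomy classes of index k (in particular every a_i and every a_i−1 is nonzero). Moreover, two cyclotomic orthomorphisms θ = [a_0,…,a_{k−1}] and θ' = [a'_0,…,a'_{k−1}] of index k are orthogonal if and only if the map C_{k,i} ↦ (a_i−a'_i)·C_{k,i} is a well-defined permutation of the cyclotomy classes of index k. -/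
/-- An orthomorphism over a finite field: a permutation `θ` such that
`x ↦ θ x - x` is also a permutation. -/
def IsOrthomorphism {F : Type*} [Field F] [Fintype F] (θ : F → F) : Prop :=
  Function.Bijective θ ∧ Function.Bijective (fun x => θ x - x)

set_option linter.unusedSectionVars false
set_option linter.unusedVariables false

section Master

variable {F : Type*} [Field F] [Fintype F]

lemma mulchar_ne_zero (η : MulChar F ℂ) {x : F} (hx : x ≠ 0) : η x ≠ 0 := by
  have h : η x * η x⁻¹ = 1 := by
    rw [← map_mul, mul_inv_cancel₀ hx, map_one]
  intro h0
  rw [h0, zero_mul] at h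
  exact zero_ne_one h

lemma class_exists (k : ℕ) (hk : 0 < k) (η : MulChar F ℂ) (hη : orderOf η = k)
    (ω : ℂ) (hω : IsPrimitiveRoot ω k) {x : F} (hx : x ≠ 0) :
    ∃ i : Fin k, η x = ω ^ (i : ℕ) := by
  have : NeZero k := ⟨hk.ne'⟩
  have hpow : (η x) ^ k = 1 := by
    rw [← MulChar.pow_apply' η hk.ne' x, ← hη, pow_orderOf_eq_one, MulChar.one_apply hx.isUnit]
  obtain ⟨i, hik, hi⟩ := hω.eq_pow_of_pow_eq_one hpow
  exact ⟨⟨i, hik⟩, hi.symm⟩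

lemma class_nonempty (k : ℕ) (hk : 0 < k) (η : MulChar F ℂ) (hη : orderOf η = k)
    (ω : ℂ) (hω : IsPrimitiveRoot ω k) (i : Fin k) :
    ∃ x : F, x ≠ 0 ∧ η x = ω ^ (i : ℕ) := by
  have : NeZero k := ⟨hk.ne'⟩
  obtain ⟨g, hg⟩ := IsCyclic.exists_generator (α := Fˣ)
  -- orderOf (η g) = k
  have hgk : (η (g : F)) ^ k = 1 := by
    rw [← MulChar.pow_apply' η hk.ne' _, ← hη, pow_orderOf_eq_one,
      MulChar.one_apply g.isUnit]
  have hfin : IsOfFinOrder (η (g : F)) := isOfFinOrder_iff_pow_eq_one.mpr ⟨k, hk, hgk⟩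
  have hd1 : orderOf (η (g : F)) ∣ k := orderOf_dvd_of_pow_eq_one hgk
  have hd2 : k ∣ orderOf (η (g : F)) := by
    rw [← hη]
    apply orderOf_dvd_of_pow_eq_one
    apply MulChar.ext
    intro u
    obtain ⟨m, hm⟩ := mem_powers_iff_mem_zpowers.mpr (hg u)
    have hpos : orderOf (η (g : F)) ≠ 0 := (orderOf_pos_iff.mpr hfin).ne'
    rw [MulChar.pow_apply' η hpos, MulChar.one_apply u.isUnit, ← hm]
    push_cast
    rw [map_pow, ← pow_mul, mul_comm, pow_mul, pow_orderOf_eq_one, one_pow]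
  have horder : orderOf (η (g : F)) = k := Nat.dvd_antisymm hd1 hd2
  have hprim : IsPrimitiveRoot (η (g : F)) k := by
    rw [← horder]; exact IsPrimitiveRoot.orderOf _
  obtain ⟨m, _, hm⟩ := hprim.eq_pow_of_pow_eq_one hω.pow_eq_one
  refine ⟨(g : F) ^ (m * (i : ℕ)), ?_, ?_⟩
  · exact pow_ne_zero _ g.ne_zero
  · rw [map_pow, pow_mul, hm]

/-- The master lemma: a map acting by `b i *` on cyclotomy class `i` is a bijection
iff all `b i ≠ 0` and the induced map on classes is injective. -/
lemma master (k : ℕ) (hk : 0 < k) (η : MulChar F ℂ) (hη : orderOf η = k)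
    (ω : ℂ) (hω : IsPrimitiveRoot ω k)
    (b : Fin k → F) (ψ : F → F) (hψ0 : ψ 0 = 0)
    (hψ : ∀ (x : F) (i : Fin k), x ≠ 0 → η x = ω ^ (i : ℕ) → ψ x = b i * x) :
    Function.Bijective ψ ↔
      ((∀ i, b i ≠ 0) ∧
        Function.Injective (fun i : Fin k => η (b i) * ω ^ (i : ℕ))) := by
  constructor
  · rintro ⟨hinj, hsurj⟩
    have hb : ∀ i, b i ≠ 0 := by
      intro i hb0
      obtain ⟨x, hx, hxi⟩ := class_nonempty k hk η hη ω hω i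
      have : ψ x = ψ 0 := by rw [hψ0, hψ x i hx hxi, hb0, zero_mul]
      exact hx (hinj this)
    refine ⟨hb, ?_⟩
    -- define σ : Fin k → Fin k
    have hval : ∀ i : Fin k, ∃ t : Fin k, η (b i) * ω ^ (i : ℕ) = ω ^ (t : ℕ) := by
      intro i
      obtain ⟨x, hx, hxi⟩ := class_nonempty k hk η hη ω hω i
      have hbx : b i * x ≠ 0 := mul_ne_zero (hb i) hx
      obtain ⟨t, ht⟩ := class_exists k hk η hη ω hω hbx
      exact ⟨t, by rw [← ht, map_mul, hxi]⟩
    choose σ hσ using hval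
    have hσsurj : Function.Surjective σ := by
      intro t
      obtain ⟨y, hy, hyt⟩ := class_nonempty k hk η hη ω hω t
      obtain ⟨x, hx⟩ := hsurj y
      have hx0 : x ≠ 0 := by rintro rfl; rw [hψ0] at hx; exact hy hx.symm
      obtain ⟨i, hi⟩ := class_exists k hk η hη ω hω hx0
      refine ⟨i, ?_⟩
      have : ω ^ ((σ i : Fin k) : ℕ) = ω ^ (t : ℕ) := by
        rw [← hσ i, ← hi, ← map_mul, ← hψ x i hx0 hi, hx, hyt]
      exact Fin.ext (hω.pow_inj (σ i).isLt t.isLt this)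
    have hσinj : Function.Injective σ := Finite.injective_iff_surjective.mpr hσsurj
    intro i j hij
    apply hσinj
    apply Fin.ext
    apply hω.pow_inj (σ i).isLt (σ j).isLt
    rw [← hσ i, ← hσ j]
    exact hij
  · rintro ⟨hb, hinj⟩
    rw [← Finite.injective_iff_bijective]
    intro x y hxy
    by_cases hx0 : x = 0
    · subst hx0
      rw [hψ0] at hxy
      by_contra hy0
      obtain ⟨j, hj⟩ := class_exists k hk η hη ω hω (Ne.symm hy0)
      rw [hψ y j (Ne.symm hy0) hj] at hxy
      exact mul_ne_zero (hb j) (Ne.symm hy0) hxy.symm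
    · by_cases hy0 : y = 0
      · subst hy0
        rw [hψ0] at hxy
        obtain ⟨i, hi⟩ := class_exists k hk η hη ω hω hx0
        rw [hψ x i hx0 hi] at hxy
        exact absurd hxy (mul_ne_zero (hb i) hx0)
      · obtain ⟨i, hi⟩ := class_exists k hk η hη ω hω hx0
        obtain ⟨j, hj⟩ := class_exists k hk η hη ω hω hy0
        rw [hψ x i hx0 hi, hψ y j hy0 hj] at hxy
        have hη_eq : η (b i) * ω ^ (i : ℕ) = η (b j) * ω ^ (j : ℕ) := by
          rw [← hi, ← hj, ← map_mul, ← map_mul, hxy]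
        have hij : i = j := hinj hη_eq
        subst hij
        exact mul_left_cancel₀ (hb i) hxy

end Master

/-- Lemma 2.1 (Evans).  Let `η` be a multiplicative character of order `k` of `F_q`,
`ω` a primitive complex `k`-th root of unity, so the cyclotomy classes are
`C_{k,i} = η⁻¹(ω^i)`.  Let `θ = [a_0,…,a_{k-1}]` be the cyclotomic map of index `k`.
Then `θ` is an orthomorphism iff the maps `C_{k,i} ↦ a_i C_{k,i}` and
`C_{k,i} ↦ (a_i - 1) C_{k,i}` are well-defined permutations of the cyclotomy classes
(the class `a_i C_{k,i}` being the class with character value `η(a_i)·ω^i`).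
Moreover two cyclotomic orthomorphisms `θ = [a_i]`, `θ' = [a'_i]` are orthogonal iff
`C_{k,i} ↦ (a_i - a'_i) C_{k,i}` is a well-defined permutation of the classes. -/
theorem lemma_characterise {F : Type*} [Field F] [Fintype F]
    (k : ℕ) (hk : 0 < k) (hdvd : k ∣ Fintype.card F - 1)
    (η : MulChar F ℂ) (hη : orderOf η = k)
    (ω : ℂ) (hω : IsPrimitiveRoot ω k)
    (a a' : Fin k → F) (θ θ' : F → F)
    (hθ0 : θ 0 = 0)
    (hθ : ∀ (x : F) (i : Fin k), x ≠ 0 → η x = ω ^ (i : ℕ) → θ x = a i * x)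
    (hθ'0 : θ' 0 = 0)
    (hθ' : ∀ (x : F) (i : Fin k), x ≠ 0 → η x = ω ^ (i : ℕ) → θ' x = a' i * x) :
    (IsOrthomorphism θ ↔
      ((∀ i, a i ≠ 0) ∧
        Function.Injective (fun i : Fin k => η (a i) * ω ^ (i : ℕ)) ∧
        (∀ i, a i - 1 ≠ 0) ∧
        Function.Injective (fun i : Fin k => η (a i - 1) * ω ^ (i : ℕ))))
    ∧ (IsOrthomorphism θ → IsOrthomorphism θ' →
        (Function.Bijective (fun x => θ x - θ' x) ↔
          ((∀ i, a i - a' i ≠ 0) ∧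
            Function.Injective (fun i : Fin k => η (a i - a' i) * ω ^ (i : ℕ))))) := by
  have h1 : Function.Bijective θ ↔
      ((∀ i, a i ≠ 0) ∧ Function.Injective (fun i : Fin k => η (a i) * ω ^ (i : ℕ))) :=
    master k hk η hη ω hω a θ hθ0 hθ
  have h2 : Function.Bijective (fun x => θ x - x) ↔
      ((∀ i, a i - 1 ≠ 0) ∧
        Function.Injective (fun i : Fin k => η (a i - 1) * ω ^ (i : ℕ))) := by
    refine master k hk η hη ω hω (fun i => a i - 1) _ (by rw [hθ0, sub_zero]) ?_
    intro x i hx hxi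
    rw [hθ x i hx hxi]; ring
  have h3 : Function.Bijective (fun x => θ x - θ' x) ↔
      ((∀ i, a i - a' i ≠ 0) ∧
        Function.Injective (fun i : Fin k => η (a i - a' i) * ω ^ (i : ℕ))) := by
    refine master k hk η hη ω hω (fun i => a i - a' i) _ (by rw [hθ0, hθ'0, sub_zero]) ?_
    intro x i hx hxi
    rw [hθ x i hx hxi, hθ' x i hx hxi]; ring
  constructor
  · rw [IsOrthomorphism, h1, h2]; tauto
  · intro _ _; exact h3
end

section
/- Let q be a prime power and k ≥ 2 a divisor of q−1. If θ is a near-linear cyclotomic orthomorphism of index k over F_q, then θ has least index k, i.e. θ ∈ 𝒟_k(q). -/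
/-- `θ ∈ 𝒞_k(q)`: a cyclotomic orthomorphism of index `k`, i.e. an orthomorphism
with `θ 0 = 0` such that `θ(x)/x` is constant on cosets of the unique subgroup of
index `k` of `Fˣ` (which, for `k ∣ q - 1`, is the set of nonzero `k`-th powers). -/
def IsCycOrthomorphism {F : Type*} [Field F] [Fintype F] (k : ℕ) (θ : F → F) : Prop :=
  IsOrthomorphism θ ∧ θ 0 = 0 ∧
    ∀ x y : F, x ≠ 0 → y ≠ 0 → (∃ z : F, x = z ^ k * y) → θ x * y = θ y * x

/-- `θ ∈ 𝒟_k(q)`: a cyclotomic orthomorphism of least index `k`. -/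
def IsLeastCycOrthomorphism {F : Type*} [Field F] [Fintype F] (k : ℕ) (θ : F → F) : Prop :=
  IsCycOrthomorphism k θ ∧
    ∀ ℓ : ℕ, ℓ < k → ℓ ∣ Fintype.card F - 1 → ¬ IsCycOrthomorphism ℓ θ

theorem not_exists_generator_pow_eq_pow {G : Type*} [Group G] {g : G}
    (hg : ∀ x, x ∈ Subgroup.zpowers g) {k ℓ : ℕ} (hk : k ∣ orderOf g)
    (hℓ : 0 < ℓ) (hℓk : ℓ < k) : ¬ ∃ w : G, g ^ ℓ = w ^ k := by
  rintro ⟨w, hw⟩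
  obtain ⟨m, rfl⟩ := Subgroup.mem_zpowers_iff.1 (hg w)
  have hpow : g ^ (ℓ : ℤ) = g ^ (m * k) := by
    rwa [zpow_mul, zpow_natCast, zpow_natCast]
  have hmod : (ℓ : ℤ) ≡ m * k [ZMOD k] :=
    (zpow_eq_zpow_iff_modEq.1 hpow).of_dvd (Int.natCast_dvd_natCast.2 hk)
  have hkℓ : (k : ℤ) ∣ ℓ :=
    Int.modEq_zero_iff_dvd.1 (hmod.trans (Int.modEq_zero_iff_dvd.2 (dvd_mul_left _ _)))
  exact absurd (Nat.le_of_dvd hℓ (Int.natCast_dvd_natCast.1 hkℓ)) (by omega)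

theorem FiniteField.exists_pow_ne_pow_of_lt {F : Type*} [Field F] [Fintype F] {k ℓ : ℕ}
    (hk : k ∣ Fintype.card F - 1) (hℓ : 0 < ℓ) (hℓk : ℓ < k) :
    ∃ z : F, z ≠ 0 ∧ ¬ ∃ w : F, z ^ ℓ = w ^ k := by
  classical
  obtain ⟨g, hg⟩ := IsCyclic.exists_generator (α := Fˣ)
  have hkg : k ∣ orderOf g := by
    rwa [orderOf_eq_card_of_forall_mem_zpowers hg, Nat.card_eq_fintype_card,
      Fintype.card_units]
  refine ⟨g, g.ne_zero, ?_⟩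
  rintro ⟨w, hw⟩
  have hw0 : w ≠ 0 := by
    rintro rfl
    exact pow_ne_zero ℓ g.ne_zero (hw.trans (zero_pow (by omega)))
  exact not_exists_generator_pow_eq_pow hg hkg hℓ hℓk
    ⟨Units.mk0 w hw0, Units.ext (by simpa using hw)⟩

theorem exists_pow_eq_mul_iff {F : Type*} [Field F] {k : ℕ} {z : F} (hz : z ≠ 0) (y : F) :
    (∃ w : F, z ^ k * y = w ^ k) ↔ ∃ w : F, y = w ^ k := by
  constructor
  · rintro ⟨w, hw⟩
    refine ⟨w / z, ?_⟩
    rw [div_pow, ← hw, mul_div_cancel_left₀ _ (pow_ne_zero k hz)]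
  · rintro ⟨w, rfl⟩
    exact ⟨z * w, (mul_pow z w k).symm⟩

section NearLinear

variable {F : Type*} [Field F] {k : ℕ} {a₀ a₁ : F} {θ : F → F}

theorem mul_eq_mul_of_nearLinear (hk : k ≠ 0)
    (hθa : ∀ x : F, x ≠ 0 → (∃ z : F, x = z ^ k) → θ x = a₀ * x)
    (hθb : ∀ x : F, x ≠ 0 → ¬ (∃ z : F, x = z ^ k) → θ x = a₁ * x)
    {x y : F} (hx : x ≠ 0) (hy : y ≠ 0) (hxy : ∃ z : F, x = z ^ k * y) :
    θ x * y = θ y * x := by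
  obtain ⟨z, rfl⟩ := hxy
  have hz : z ≠ 0 := by
    rintro rfl
    exact hx (by rw [zero_pow hk, zero_mul])
  have hpow := exists_pow_eq_mul_iff (k := k) hz y
  by_cases hy' : ∃ w : F, y = w ^ k
  · rw [hθa _ hx (by simpa [eq_comm] using hpow.2 hy'), hθa y hy hy']
    ring
  · rw [hθb _ hx (by simpa [eq_comm] using mt hpow.1 hy'), hθb y hy hy']
    ring

theorem isCycOrthomorphism_of_nearLinear [Fintype F] (hk : k ≠ 0) (hθ0 : θ 0 = 0)
    (hθa : ∀ x : F, x ≠ 0 → (∃ z : F, x = z ^ k) → θ x = a₀ * x)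
    (hθb : ∀ x : F, x ≠ 0 → ¬ (∃ z : F, x = z ^ k) → θ x = a₁ * x)
    (horth : IsOrthomorphism θ) : IsCycOrthomorphism k θ :=
  ⟨horth, hθ0, fun _ _ hx hy hxy => mul_eq_mul_of_nearLinear hk hθa hθb hx hy hxy⟩

theorem not_isCycOrthomorphism_of_nearLinear [Fintype F] (hdvd : k ∣ Fintype.card F - 1)
    (hne : a₀ ≠ a₁)
    (hθa : ∀ x : F, x ≠ 0 → (∃ z : F, x = z ^ k) → θ x = a₀ * x)
    (hθb : ∀ x : F, x ≠ 0 → ¬ (∃ z : F, x = z ^ k) → θ x = a₁ * x)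
    {ℓ : ℕ} (hℓ : 0 < ℓ) (hℓk : ℓ < k) : ¬ IsCycOrthomorphism ℓ θ := by
  intro hcyc
  obtain ⟨z, hz, hzk⟩ := FiniteField.exists_pow_ne_pow_of_lt hdvd hℓ hℓk
  have hzℓ : z ^ ℓ ≠ 0 := pow_ne_zero ℓ hz
  have hrel := hcyc.2.2 (z ^ ℓ) 1 hzℓ one_ne_zero ⟨z, (mul_one _).symm⟩
  rw [hθb _ hzℓ (by simpa using hzk), hθa 1 one_ne_zero ⟨1, (one_pow k).symm⟩] at hrel
  exact hne (mul_right_cancel₀ hzℓ (by simpa using hrel.symm))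

end NearLinear

/-- Lemma 2.3.  A near-linear cyclotomic orthomorphism of index `k ≥ 2`
(multiplier `a₀` on the class `C_{k,0}` of nonzero `k`-th powers, and common
multiplier `a₁ = a₂ = ⋯ = a_{k-1}` on all other classes, with `a₀ ≠ a₁`)
has least index `k`, i.e. lies in `𝒟_k(q)`. -/
theorem lemma_nearlinDk {F : Type*} [Field F] [Fintype F]
    (k : ℕ) (hk : 2 ≤ k) (hdvd : k ∣ Fintype.card F - 1)
    (a₀ a₁ : F) (hne : a₀ ≠ a₁) (θ : F → F)
    (hθ0 : θ 0 = 0)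
    (hθa : ∀ x : F, x ≠ 0 → (∃ z : F, x = z ^ k) → θ x = a₀ * x)
    (hθb : ∀ x : F, x ≠ 0 → ¬ (∃ z : F, x = z ^ k) → θ x = a₁ * x)
    (horth : IsOrthomorphism θ) :
    IsLeastCycOrthomorphism k θ := by
  refine ⟨isCycOrthomorphism_of_nearLinear (by omega) hθ0 hθa hθb horth,
    fun ℓ hℓk hℓdvd => not_isCycOrthomorphism_of_nearLinear hdvd hne hθa hθb ?_ hℓk⟩
  have hcard : 0 < Fintype.card F - 1 := by
    have := Fintype.one_lt_card (α := F)
    omega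
  exact Nat.pos_of_dvd_of_pos hℓdvd hcard
end

section
/- Let q be a prime power and k ≥ 2 a divisor of q−1. The number of near-linear cyclotomic orthomorphisms of index k over F_q is exactly (q−1−k)(q−1−2k)/k². -/
/-- The cyclotomic map `θ` of index `k` is near-linear if it has multiplier `a₀` on the
class `C_{k,0}` (the nonzero `k`-th powers) and a common multiplier
`a₁ = a₂ = ⋯ = a_{k-1}` on all other classes, with `a₀ ≠ a₁`. -/
def IsNearLinear {F : Type*} [Field F] [Fintype F] (k : ℕ) (θ : F → F) : Prop :=
  ∃ a₀ a₁ : F, a₀ ≠ a₁ ∧ θ 0 = 0 ∧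
    ∀ x : F, x ≠ 0 →
      (((∃ z : F, x = z ^ k) → θ x = a₀ * x) ∧ (¬ (∃ z : F, x = z ^ k) → θ x = a₁ * x))

/-!
Let `H` be the group of nonzero `k`-th powers. The near-linear map with multipliers `a` on `H`
and `b` off `H` is a permutation iff `a, b ≠ 0` and `b / a ∈ H`: surjectivity onto `b` forces
`b / a ∈ H`, and conversely `a * x = b * y` with `x ∈ H` puts `y = x / (b / a)` in `H`.
Since `θ - id` is the near-linear map with multipliers `a - 1, b - 1`, the orthomorphisms
correspond to the pairs `a ≠ b` with `a, b ≠ 0, 1`, `b / a ∈ H` and `(b - 1) / (a - 1) ∈ H`.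
The map `(a, b) ↦ (b / a, (b - 1) / (a - 1))` is a bijection from these pairs onto the pairs of
distinct elements of `H \ {1}`, and `|H| = (q - 1) / k`. As `k ≥ 2` there is a nonzero
non-`k`-th power `g`, and evaluating at `1` and `g` shows that distinct pairs give distinct maps.
-/

theorem Set.ncard_offDiag {α : Type*} {s : Set α} (hs : s.Finite) :
    s.offDiag.ncard = s.ncard * s.ncard - s.ncard := by
  rw [Set.ncard_eq_toFinset_card _ hs.offDiag, hs.toFinset_offDiag, Finset.offDiag_card,
    ← Set.ncard_eq_toFinset_card _ hs]

def IsPow {M : Type*} [Monoid M] (k : ℕ) (x : M) : Prop :=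
  ∃ z, x = z ^ k

namespace IsPow

variable {M : Type*} {k : ℕ}

theorem one [Monoid M] : IsPow k (1 : M) :=
  ⟨1, (one_pow k).symm⟩

theorem div [DivisionCommMonoid M] {x y : M} : IsPow k x → IsPow k y → IsPow k (x / y) := by
  rintro ⟨z, rfl⟩ ⟨w, rfl⟩
  exact ⟨z / w, (div_pow z w k).symm⟩

end IsPow

section NearLinearMap

variable {F : Type*} [Field F] {k : ℕ} {a b : F}

theorem setOf_ne_zero_isPow_eq_image_units :
    {x : F | x ≠ 0 ∧ IsPow k x} = Units.val '' ((powMonoidHom k : Fˣ →* Fˣ).range : Set Fˣ) := by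
  ext x
  constructor
  · rintro ⟨hx, z, rfl⟩
    have hz : z ≠ 0 ∨ k = 0 := by
      by_contra! h
      exact hx (by rw [h.1, zero_pow h.2])
    rcases hz with hz | rfl
    · exact ⟨Units.mk0 z hz ^ k, ⟨_, rfl⟩, by simp⟩
    · exact ⟨1, one_mem _, by simp⟩
  · rintro ⟨_, ⟨u, rfl⟩, rfl⟩
    exact ⟨Units.ne_zero _, u, by simp⟩

-- No separate case `x = 0` is needed: both branches send `0` to `0`.
open Classical in
noncomputable def nearLinearMap (k : ℕ) (a b : F) (x : F) : F :=
  (if IsPow k x then a else b) * x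

theorem nearLinearMap_of_isPow {x : F} (hx : IsPow k x) : nearLinearMap k a b x = a * x := by
  simp [nearLinearMap, hx]

theorem nearLinearMap_of_not_isPow {x : F} (hx : ¬IsPow k x) :
    nearLinearMap k a b x = b * x := by
  simp [nearLinearMap, hx]

theorem nearLinearMap_zero : nearLinearMap k a b 0 = 0 :=
  mul_zero _

theorem nearLinearMap_sub_self :
    (fun x => nearLinearMap k a b x - x) = nearLinearMap k (a - 1) (b - 1) := by
  funext x
  unfold nearLinearMap
  split_ifs <;> ring

theorem isNearLinear_iff [Fintype F] {θ : F → F} :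
    IsNearLinear k θ ↔ ∃ a b, a ≠ b ∧ θ = nearLinearMap k a b := by
  constructor
  · rintro ⟨a, b, hab, h0, hθ⟩
    refine ⟨a, b, hab, funext fun x => ?_⟩
    rcases eq_or_ne x 0 with rfl | hx
    · rw [h0, nearLinearMap_zero]
    by_cases hp : IsPow k x
    · rw [(hθ x hx).1 hp, nearLinearMap_of_isPow hp]
    · rw [(hθ x hx).2 hp, nearLinearMap_of_not_isPow hp]
  · rintro ⟨a, b, hab, rfl⟩
    exact ⟨a, b, hab, nearLinearMap_zero,
      fun x _ => ⟨nearLinearMap_of_isPow, nearLinearMap_of_not_isPow⟩⟩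

theorem nearLinearMap_injective (ha : a ≠ 0) (hb : b ≠ 0) (hba : IsPow k (b / a)) :
    Function.Injective (nearLinearMap k a b) := by
  have cross : ∀ x y : F, IsPow k x → ¬IsPow k y → a * x ≠ b * y := by
    intro x y hx hy h
    apply hy
    have : y = x / (b / a) := by field_simp; linear_combination -h
    exact this ▸ hx.div hba
  intro x y h
  by_cases hx : IsPow k x <;> by_cases hy : IsPow k y <;>
    simp only [nearLinearMap_of_isPow, nearLinearMap_of_not_isPow, hx, hy,
      not_false_eq_true] at h
  · exact mul_left_cancel₀ ha h
  · exact absurd h (cross x y hx hy)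
  · exact absurd h.symm (cross y x hy hx)
  · exact mul_left_cancel₀ hb h

theorem nearLinearMap_bijective_iff [Finite F] {g : F} (hg₀ : g ≠ 0) (hg : ¬IsPow k g) :
    Function.Bijective (nearLinearMap k a b) ↔ a ≠ 0 ∧ b ≠ 0 ∧ IsPow k (b / a) := by
  refine ⟨fun h => ?_, fun ⟨ha, hb, hba⟩ =>
    (nearLinearMap_injective ha hb hba).bijective_of_finite⟩
  have ha : a ≠ 0 := by
    rintro rfl
    refine one_ne_zero (h.1 ?_)
    rw [nearLinearMap_zero, nearLinearMap_of_isPow IsPow.one, zero_mul]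
  have hb : b ≠ 0 := by
    rintro rfl
    refine hg₀ (h.1 ?_)
    rw [nearLinearMap_zero, nearLinearMap_of_not_isPow hg, zero_mul]
  refine ⟨ha, hb, ?_⟩
  obtain ⟨x, hx⟩ := h.2 b
  by_cases hp : IsPow k x
  · rw [nearLinearMap_of_isPow hp] at hx
    rwa [← hx, mul_div_cancel_left₀ x ha]
  · rw [nearLinearMap_of_not_isPow hp, mul_eq_left₀ hb] at hx
    exact absurd (hx ▸ IsPow.one) hp

theorem isOrthomorphism_nearLinearMap_iff [Fintype F] {g : F} (hg₀ : g ≠ 0)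
    (hg : ¬IsPow k g) :
    IsOrthomorphism (nearLinearMap k a b) ↔
      (a ≠ 0 ∧ b ≠ 0 ∧ IsPow k (b / a)) ∧
        (a - 1 ≠ 0 ∧ b - 1 ≠ 0 ∧ IsPow k ((b - 1) / (a - 1))) := by
  rw [IsOrthomorphism, nearLinearMap_sub_self, nearLinearMap_bijective_iff hg₀ hg,
    nearLinearMap_bijective_iff hg₀ hg]

theorem uncurry_nearLinearMap_injective {g : F} (hg₀ : g ≠ 0) (hg : ¬IsPow k g) :
    Function.Injective (Function.uncurry (nearLinearMap (F := F) k)) := by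
  rintro ⟨a, b⟩ ⟨a', b'⟩ h
  have h1 := congrFun h 1
  have hg' := congrFun h g
  simp only [Function.uncurry_apply_pair, nearLinearMap_of_isPow IsPow.one,
    nearLinearMap_of_not_isPow hg, mul_one] at h1 hg'
  rw [h1, mul_right_cancel₀ hg₀ hg']

end NearLinearMap

section Counting

variable {F : Type*} [Field F] [Fintype F] {k : ℕ}

theorem ncard_setOf_ne_zero : {x : F | x ≠ 0}.ncard = Fintype.card F - 1 := by
  rw [← Set.compl_singleton_eq, Set.ncard_compl, Set.ncard_singleton, Nat.card_eq_fintype_card]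

theorem ncard_setOf_ne_zero_isPow :
    {x : F | x ≠ 0 ∧ IsPow k x}.ncard =
      (Fintype.card F - 1) / (Fintype.card F - 1).gcd k := by
  rw [setOf_ne_zero_isPow_eq_image_units, Set.ncard_image_of_injective _ Units.val_injective,
    ← Nat.card_coe_set_eq, SetLike.coe_sort_coe, IsCyclic.card_powMonoidHom_range,
    Nat.card_units, Nat.card_eq_fintype_card]

theorem exists_ne_zero_not_isPow (hk : 1 < (Fintype.card F - 1).gcd k) :
    ∃ g : F, g ≠ 0 ∧ ¬IsPow k g := by
  have hq : 0 < Fintype.card F - 1 := Nat.sub_pos_of_lt Fintype.one_lt_card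
  have hlt : {x : F | x ≠ 0 ∧ IsPow k x}.ncard < {x : F | x ≠ 0}.ncard := by
    rw [ncard_setOf_ne_zero_isPow, ncard_setOf_ne_zero]
    exact Nat.div_lt_self hq hk
  obtain ⟨g, hg₀, hg⟩ := Set.exists_mem_notMem_of_ncard_lt_ncard hlt
  exact ⟨g, hg₀, fun h => hg ⟨hg₀, h⟩⟩

def nearLinearMultipliers (k : ℕ) : Set (F × F) :=
  {p | p.1 ≠ p.2 ∧ IsOrthomorphism (nearLinearMap k p.1 p.2)}

theorem setOf_isOrthomorphism_isNearLinear :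
    {θ : F → F | IsOrthomorphism θ ∧ IsNearLinear k θ} =
      Function.uncurry (nearLinearMap k) '' nearLinearMultipliers k := by
  ext θ
  simp only [Set.mem_ofPred_eq, isNearLinear_iff, Set.mem_image, nearLinearMultipliers,
    Prod.exists, Function.uncurry_apply_pair]
  constructor
  · rintro ⟨hθ, a, b, hab, rfl⟩
    exact ⟨a, b, ⟨hab, hθ⟩, rfl⟩
  · rintro ⟨a, b, ⟨hab, hθ⟩, rfl⟩
    exact ⟨hθ, a, b, hab, rfl⟩

theorem mem_nearLinearMultipliers_iff {g : F} (hg₀ : g ≠ 0) (hg : ¬IsPow k g) {a b : F} :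
    (a, b) ∈ nearLinearMultipliers k ↔ a ≠ b ∧
      (a ≠ 0 ∧ b ≠ 0 ∧ IsPow k (b / a)) ∧ (a - 1 ≠ 0 ∧ b - 1 ≠ 0 ∧ IsPow k ((b - 1) / (a - 1))) :=
  and_congr_right' (isOrthomorphism_nearLinearMap_iff hg₀ hg)

theorem bijOn_nearLinearMultipliers {g : F} (hg₀ : g ≠ 0) (hg : ¬IsPow k g) :
    Set.BijOn (fun p : F × F => (p.2 / p.1, (p.2 - 1) / (p.1 - 1))) (nearLinearMultipliers k)
      ({x | x ≠ 0 ∧ IsPow k x} \ {1}).offDiag := by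
  -- `b = t * a` and `b - 1 = s * (a - 1)` determine `a = (1 - s) / (t - s)`
  let inv : F × F → F × F := fun q => ((1 - q.2) / (q.1 - q.2), q.1 * ((1 - q.2) / (q.1 - q.2)))
  have inv_spec : ∀ q ∈ ({x : F | x ≠ 0 ∧ IsPow k x} \ {1}).offDiag,
      inv q ∈ nearLinearMultipliers k ∧
        ((inv q).2 / (inv q).1, ((inv q).2 - 1) / ((inv q).1 - 1)) = q := by
    rintro ⟨t, s⟩ ⟨⟨⟨ht₀, ht⟩, ht₁⟩, ⟨⟨hs₀, hs⟩, hs₁⟩, hts⟩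
    have hts₀ : t - s ≠ 0 := sub_ne_zero.2 hts
    have ha₁_eq : (1 - s) / (t - s) - 1 = (1 - t) / (t - s) := by field_simp; ring
    have hb₁_eq : t * ((1 - s) / (t - s)) - 1 = s * ((1 - s) / (t - s) - 1) := by
      field_simp; ring
    simp only [inv]
    set a := (1 - s) / (t - s)
    have ha : a ≠ 0 := div_ne_zero (sub_ne_zero.2 (Ne.symm hs₁)) hts₀
    have ha₁ : a - 1 ≠ 0 := ha₁_eq ▸ div_ne_zero (sub_ne_zero.2 (Ne.symm ht₁)) hts₀
    rw [mem_nearLinearMultipliers_iff hg₀ hg, hb₁_eq, mul_div_cancel_right₀ _ ha,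
      mul_div_cancel_right₀ _ ha₁]
    refine ⟨⟨?_, ⟨ha, mul_ne_zero ht₀ ha, ht⟩, ha₁, mul_ne_zero hs₀ ha₁, hs⟩, rfl⟩
    exact fun h => ht₁ (mul_right_cancel₀ ha (h.symm.trans (one_mul a).symm))
  refine Set.InvOn.bijOn (f' := inv) ⟨?_, fun q hq => (inv_spec q hq).2⟩ ?_
    fun q hq => (inv_spec q hq).1
  · rintro ⟨a, b⟩ hab
    obtain ⟨hne, ⟨ha, hb, -⟩, ha₁, hb₁, -⟩ := (mem_nearLinearMultipliers_iff hg₀ hg).1 hab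
    have hab₀ : a - b ≠ 0 := sub_ne_zero.2 hne
    have hnum : 1 - (b - 1) / (a - 1) = (a - b) / (a - 1) := by field_simp; ring
    have hden : b / a - (b - 1) / (a - 1) = (a - b) / (a * (a - 1)) := by field_simp; ring
    have ha_eq : (a - b) / (a - 1) / ((a - b) / (a * (a - 1))) = a := by field_simp
    simp only [inv, hnum, hden, ha_eq, div_mul_cancel₀ b ha]
  · rintro ⟨a, b⟩ hab
    obtain ⟨hne, ⟨ha, hb, hba⟩, ha₁, hb₁, hba₁⟩ := (mem_nearLinearMultipliers_iff hg₀ hg).1 hab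
    refine ⟨⟨⟨div_ne_zero hb ha, hba⟩, ?_⟩, ⟨⟨div_ne_zero hb₁ ha₁, hba₁⟩, ?_⟩, ?_⟩
    · exact div_ne_one_of_ne hne.symm
    · exact div_ne_one_of_ne (sub_left_injective.ne hne.symm)
    · rw [Ne, div_eq_div_iff ha ha₁]
      exact fun h => hne (by linear_combination h)

end Counting

/-- Theorem 2.5 (Niederreiter–Winterhof).  The number of near-linear orthomorphisms
of index `k` over `F_q` is `(q - 1 - k)(q - 1 - 2k)/k²`. -/
theorem thm_numnearlin {F : Type*} [Field F] [Fintype F]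
    (k : ℕ) (hk : 2 ≤ k) (hdvd : k ∣ Fintype.card F - 1) :
    {θ : F → F | IsOrthomorphism θ ∧ IsNearLinear k θ}.ncard =
      (Fintype.card F - 1 - k) * (Fintype.card F - 1 - 2 * k) / k ^ 2 := by
  have hgcd : (Fintype.card F - 1).gcd k = k := Nat.gcd_eq_right hdvd
  obtain ⟨g, hg₀, hg⟩ := exists_ne_zero_not_isPow (F := F) (k := k) (by omega)
  obtain ⟨m, hm⟩ := hdvd
  have hD : ({x : F | x ≠ 0 ∧ IsPow k x} \ {1}).ncard = m - 1 := by
    rw [Set.ncard_sdiff_singleton_of_mem (by exact ⟨one_ne_zero, IsPow.one⟩),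
      ncard_setOf_ne_zero_isPow, hgcd, hm, Nat.mul_div_cancel_left _ (by omega)]
  have hformula : (k * m - k) * (k * m - 2 * k) / k ^ 2 = (m - 1) * (m - 1) - (m - 1) := by
    rw [show (k * m - k) * (k * m - 2 * k) = k ^ 2 * ((m - 1) * (m - 2)) by
        rw [← Nat.mul_sub_one, mul_comm 2 k, ← Nat.mul_sub]; ring,
      Nat.mul_div_cancel_left _ (by positivity), ← Nat.mul_sub_one, Nat.sub_sub]
  rw [setOf_isOrthomorphism_isNearLinear,
    Set.ncard_image_of_injective _ (uncurry_nearLinearMap_injective hg₀ hg),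
    (bijOn_nearLinearMultipliers hg₀ hg).ncard_eq, Set.ncard_offDiag (Set.toFinite _), hD, hm,
    hformula]
end

section
/- Let E be a finite extension field of a finite field F with |F| ≥ 4, and let a_1, a_2 be distinct elements of F∖{0,1}. Set k = (|E|−1)/(|F|−1), and define θ: E → E by θ(0) = 0, θ(x) = a_1·x for x ∈ F∖{0}, and θ(x) = a_2·x for x ∈ E∖F. Then θ is an orthomorphism over E of least index k, i.e. θ ∈ 𝒟_k(|E|). -/
section Aux

variable {F E : Type*} [Field F] [Fintype F] [Field E] [Fintype E] [Algebra F E]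

/-- Membership in the image subfield is detected by the Frobenius equation. -/
lemma aux_mem_range_iff (hF : 1 < Fintype.card F) (u : E) :
    u ∈ Set.range (algebraMap F E) ↔ u ^ Fintype.card F = u := by
  classical
  constructor
  · rintro ⟨a, rfl⟩
    rw [← map_pow, FiniteField.pow_card]
  · intro hu
    set q := Fintype.card F with hq
    have hP : (Polynomial.X ^ q - Polynomial.X : Polynomial E) ≠ 0 :=
      FiniteField.X_pow_card_sub_X_ne_zero E hF
    set s := (Polynomial.X ^ q - Polynomial.X : Polynomial E).roots.toFinset with hs
    have hscard : s.card ≤ q := by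
      calc s.card ≤ (Polynomial.X ^ q - Polynomial.X : Polynomial E).roots.card :=
            Multiset.toFinset_card_le _
        _ ≤ (Polynomial.X ^ q - Polynomial.X : Polynomial E).natDegree :=
            (Polynomial.card_roots' _)
        _ = q := FiniteField.X_pow_card_sub_X_natDegree_eq E hF
    set t := Finset.univ.image (algebraMap F E) with ht
    have htcard : t.card = q := by
      rw [ht, Finset.card_image_of_injective _ (algebraMap F E).injective, Finset.card_univ]
    have hts : t ⊆ s := by
      intro v hv
      simp only [ht, Finset.mem_image] at hv
      obtain ⟨a, -, rfl⟩ := hv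
      simp only [hs, Multiset.mem_toFinset, Polynomial.mem_roots hP, Polynomial.IsRoot,
        Polynomial.eval_sub, Polynomial.eval_pow, Polynomial.eval_X]
      rw [← map_pow, FiniteField.pow_card, sub_self]
    have hst : s = t := (Finset.eq_of_subset_of_card_le hts (htcard ▸ hscard)).symm
    have hu' : u ∈ s := by
      simp only [hs, Multiset.mem_toFinset, Polynomial.mem_roots hP, Polynomial.IsRoot,
        Polynomial.eval_sub, Polynomial.eval_pow, Polynomial.eval_X, hu, sub_self]
    rw [hst] at hu'
    simp only [ht, Finset.mem_image] at hu'
    obtain ⟨a, -, ha⟩ := hu'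
    exact ⟨a, ha⟩

lemma aux_mem_range_iff' (hF : 1 < Fintype.card F) {u : E} (hu : u ≠ 0) :
    u ∈ Set.range (algebraMap F E) ↔ u ^ (Fintype.card F - 1) = 1 := by
  rw [aux_mem_range_iff hF]
  have hq : Fintype.card F - 1 + 1 = Fintype.card F := by omega
  constructor
  · intro h
    have h2 : u ^ (Fintype.card F - 1) * u = 1 * u := by
      rw [← pow_succ, hq, h, one_mul]
    exact mul_right_cancel₀ hu h2
  · intro h
    rw [← hq, pow_succ, h, one_mul]

lemma aux_mul_mem {b : F} (hb : b ≠ 0) (x : E) :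
    algebraMap F E b * x ∈ Set.range (algebraMap F E) ↔
      x ∈ Set.range (algebraMap F E) := by
  constructor
  · rintro ⟨c, hc⟩
    refine ⟨b⁻¹ * c, ?_⟩
    rw [map_mul, hc, ← mul_assoc, ← map_mul, inv_mul_cancel₀ hb, map_one, one_mul]
  · rintro ⟨c, rfl⟩
    exact ⟨b * c, map_mul _ _ _⟩

lemma aux_map_ne_zero {b : F} (hb : b ≠ 0) : algebraMap F E b ≠ 0 := fun h =>
  hb ((algebraMap F E).injective (h.trans (map_zero _).symm))

lemma aux_bij {b₁ b₂ : F} (hb₁ : b₁ ≠ 0) (hb₂ : b₂ ≠ 0) (σ : E → E) (h0 : σ 0 = 0)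
    (h1 : ∀ x : E, x ≠ 0 → x ∈ Set.range (algebraMap F E) → σ x = algebraMap F E b₁ * x)
    (h2 : ∀ x : E, x ∉ Set.range (algebraMap F E) → σ x = algebraMap F E b₂ * x) :
    Function.Bijective σ := by
  have hb₁' : algebraMap F E b₁ ≠ 0 := aux_map_ne_zero hb₁
  have hb₂' : algebraMap F E b₂ ≠ 0 := aux_map_ne_zero hb₂
  have hne : ∀ x : E, x ≠ 0 → σ x ≠ 0 := by
    intro x hx
    by_cases hxR : x ∈ Set.range (algebraMap F E)
    · rw [h1 x hx hxR]; exact mul_ne_zero hb₁' hx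
    · rw [h2 x hxR]; exact mul_ne_zero hb₂' hx
  have hmem : ∀ x : E, x ≠ 0 →
      (σ x ∈ Set.range (algebraMap F E) ↔ x ∈ Set.range (algebraMap F E)) := by
    intro x hx
    by_cases hxR : x ∈ Set.range (algebraMap F E)
    · rw [h1 x hx hxR, aux_mul_mem hb₁]
    · rw [h2 x hxR, aux_mul_mem hb₂]
  refine Finite.injective_iff_bijective.mp ?_
  intro x y hxy
  by_cases hx : x = 0
  · subst hx
    by_contra hy
    exact hne y (Ne.symm hy) (by rw [← hxy, h0])
  by_cases hy : y = 0
  · subst hy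
    exact absurd (by rw [hxy, h0]) (hne x hx)
  by_cases hxR : x ∈ Set.range (algebraMap F E)
  · have hyR : y ∈ Set.range (algebraMap F E) := by
      rw [← hmem y hy, ← hxy, hmem x hx]; exact hxR
    rw [h1 x hx hxR, h1 y hy hyR] at hxy
    exact mul_left_cancel₀ hb₁' hxy
  · have hyR : y ∉ Set.range (algebraMap F E) := by
      rw [← hmem y hy, ← hxy, hmem x hx]; exact hxR
    rw [h2 x hxR, h2 y hyR] at hxy
    exact mul_left_cancel₀ hb₂' hxy

end Aux

/-- Lemma 2.7.  Let `E` be an extension field of a finite field `F` with `|F| ≥ 4`,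
let `a₁ ≠ a₂` be elements of `F ∖ {0, 1}`, and put `k = (|E| - 1)/(|F| - 1)`.
The map `θ : E → E` with `θ 0 = 0`, `θ x = a₁·x` for `x ∈ F ∖ {0}` and `θ x = a₂·x`
for `x ∈ E ∖ F` is an orthomorphism over `E` of least index `k`. -/
theorem lemma_subfield {F E : Type*} [Field F] [Fintype F] [Field E] [Fintype E]
    [Algebra F E] (hF : 4 ≤ Fintype.card F)
    (a₁ a₂ : F) (hne : a₁ ≠ a₂) (h10 : a₁ ≠ 0) (h11 : a₁ ≠ 1) (h20 : a₂ ≠ 0) (h21 : a₂ ≠ 1)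
    (θ : E → E) (hθ0 : θ 0 = 0)
    (hθ1 : ∀ x : E, x ≠ 0 → x ∈ Set.range (algebraMap F E) → θ x = algebraMap F E a₁ * x)
    (hθ2 : ∀ x : E, x ∉ Set.range (algebraMap F E) → θ x = algebraMap F E a₂ * x) :
    IsLeastCycOrthomorphism ((Fintype.card E - 1) / (Fintype.card F - 1)) θ := by
  classical
  have hE2 : 1 < Fintype.card E := Fintype.one_lt_card
  have hF1 : 1 < Fintype.card F := by omega
  have hq : 0 < Fintype.card F - 1 := by omega
  have hcard : Fintype.card E = Fintype.card F ^ Module.finrank F E := Module.card_eq_pow_finrank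
  have hdvd : (Fintype.card F - 1) ∣ (Fintype.card E - 1) := by
    rw [hcard]
    simpa using Nat.sub_dvd_pow_sub_pow (Fintype.card F) 1 (Module.finrank F E)
  set k := (Fintype.card E - 1) / (Fintype.card F - 1) with hk
  have hkm : k * (Fintype.card F - 1) = Fintype.card E - 1 := Nat.div_mul_cancel hdvd
  have hNpos : 0 < Fintype.card E - 1 := by omega
  have hkpos : 0 < k := by
    rcases Nat.eq_zero_or_pos k with h | h
    · rw [h, zero_mul] at hkm; omega
    · exact h
  -- bijectivity of θ
  have hbijθ : Function.Bijective θ := aux_bij h10 h20 θ hθ0 hθ1 hθ2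
  -- bijectivity of x ↦ θ x - x
  have hbijσ : Function.Bijective (fun x : E => θ x - x) := by
    refine aux_bij (b₁ := a₁ - 1) (b₂ := a₂ - 1) (sub_ne_zero.mpr h11) (sub_ne_zero.mpr h21)
      _ (by simp [hθ0]) ?_ ?_
    · intro x hx hxR
      rw [hθ1 x hx hxR, map_sub, map_one, sub_mul, one_mul]
    · intro x hxR
      rw [hθ2 x hxR, map_sub, map_one, sub_mul, one_mul]
  refine ⟨⟨⟨hbijθ, hbijσ⟩, hθ0, ?_⟩, ?_⟩
  · -- cyclotomic of index k
    rintro x y hx hy ⟨z, hz⟩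
    have hz0 : z ≠ 0 := by
      rintro rfl
      rw [zero_pow hkpos.ne', zero_mul] at hz
      exact hx hz
    have hzk : z ^ k ∈ Set.range (algebraMap F E) := by
      rw [aux_mem_range_iff' hF1 (pow_ne_zero _ hz0), ← pow_mul, hkm]
      exact FiniteField.pow_card_sub_one_eq_one z hz0
    obtain ⟨c, hc⟩ := hzk
    have hc0 : c ≠ 0 := by
      rintro rfl
      rw [map_zero] at hc
      exact pow_ne_zero k hz0 hc.symm
    have hxy : x ∈ Set.range (algebraMap F E) ↔ y ∈ Set.range (algebraMap F E) := by
      rw [hz, ← hc]; exact aux_mul_mem hc0 y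
    by_cases hyR : y ∈ Set.range (algebraMap F E)
    · rw [hθ1 x hx (hxy.mpr hyR), hθ1 y hy hyR]; ring
    · rw [hθ2 x (fun h => hyR (hxy.mp h)), hθ2 y hyR]; ring
  · -- least index
    intro ℓ hℓk hℓdvd hC
    have hℓ0 : ℓ ≠ 0 := by
      rintro rfl
      exact hNpos.ne' (Nat.eq_zero_of_zero_dvd hℓdvd)
    obtain ⟨g, hg⟩ := IsCyclic.exists_generator (α := Eˣ)
    have hgord : orderOf g = Fintype.card E - 1 := by
      rw [orderOf_eq_card_of_forall_mem_zpowers hg, Nat.card_eq_fintype_card, Fintype.card_units]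
    set h : E := (g : E) ^ ℓ with hh
    have hg0 : (g : E) ≠ 0 := g.ne_zero
    have hhne : h ≠ 0 := pow_ne_zero _ hg0
    have hhR : h ∉ Set.range (algebraMap F E) := by
      intro hmem
      rw [aux_mem_range_iff' hF1 hhne, hh, ← pow_mul] at hmem
      have hu : (g ^ (ℓ * (Fintype.card F - 1)) : Eˣ) = 1 := Units.ext (by simpa using hmem)
      have hdvd' := orderOf_dvd_of_pow_eq_one hu
      rw [hgord] at hdvd'
      have hlt : ℓ * (Fintype.card F - 1) < Fintype.card E - 1 := by
        calc ℓ * (Fintype.card F - 1) < k * (Fintype.card F - 1) :=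
              (Nat.mul_lt_mul_right hq).mpr hℓk
          _ = Fintype.card E - 1 := hkm
      have hpos : 0 < ℓ * (Fintype.card F - 1) := Nat.mul_pos (Nat.pos_of_ne_zero hℓ0) hq
      exact absurd (Nat.le_of_dvd hpos hdvd') (not_le.mpr hlt)
    have key := hC.2.2 h 1 hhne one_ne_zero ⟨(g : E), by rw [mul_one]⟩
    rw [hθ2 h hhR, hθ1 1 one_ne_zero ⟨1, map_one _⟩, mul_one, mul_one] at key
    have := mul_right_cancel₀ hhne key
    exact hne ((algebraMap F E).injective this).symm
end

section
/- Let q be an odd prime power. Suppose there exist an integer h ≥ 1, permutations ρ, τ of {1,…,h}, a vector σ ∈ {+1,−1}^h, and nonzero field elements r, m_1,…,m_h, v_1,…,v_h ∈ F_q^* such that σ(i)·m_i·v_i = r·v_{ρ(i)} and (m_i−1)·v_i = (r−1)·v_{τ(i)} for all 1 ≤ i ≤ h, and such that (m_1−r) · ∏_{i=2}^{h}(m_1−m_i) · ∏_{1≤i<j≤h}(v_i²−v_j²) ≠ 0. Then there exists an orthomorphism over F_q of least index (q−1)/2, i.e. 𝒟_{(q−1)/2}(q) is nonempty. -/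
lemma inj_aux {F : Type*} [Field F] {h : ℕ} (v : Fin h → F)
    (dist : ∀ i j, v i ^ 2 = v j ^ 2 → i = j)
    (r' : F) (hr' : r' ≠ 0) (m' : Fin h → F) (hm' : ∀ i, m' i ≠ 0)
    (π : Fin h → Fin h) (hπ : Function.Injective π)
    (key : ∀ i, m' i ^ 2 * v i ^ 2 = r' ^ 2 * v (π i) ^ 2)
    (g : F → F)
    (hg1 : ∀ x (i : Fin h), x ^ 2 = v i ^ 2 → g x = m' i * x)
    (hg2 : ∀ x, (∀ i, x ^ 2 ≠ v i ^ 2) → g x = r' * x) :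
    Function.Injective g := by
  intro a b hab
  by_cases ha : ∃ i, a ^ 2 = v i ^ 2
  · obtain ⟨i, hi⟩ := ha
    by_cases hb : ∃ j, b ^ 2 = v j ^ 2
    · obtain ⟨j, hj⟩ := hb
      rw [hg1 a i hi, hg1 b j hj] at hab
      have hsq : m' i ^ 2 * a ^ 2 = m' j ^ 2 * b ^ 2 := by
        have := congrArg (· ^ 2) hab
        simp only [mul_pow] at this
        exact this
      rw [hi, hj, key i, key j] at hsq
      have : v (π i) ^ 2 = v (π j) ^ 2 :=
        mul_left_cancel₀ (pow_ne_zero 2 hr') hsq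
      have hij : i = j := hπ (dist _ _ this)
      subst hij
      exact mul_left_cancel₀ (hm' i) hab
    · push_neg at hb
      rw [hg1 a i hi, hg2 b hb] at hab
      have hsq : m' i ^ 2 * a ^ 2 = r' ^ 2 * b ^ 2 := by
        have := congrArg (· ^ 2) hab
        simp only [mul_pow] at this
        exact this
      rw [hi, key i] at hsq
      exact absurd (mul_left_cancel₀ (pow_ne_zero 2 hr') hsq).symm (hb (π i))
  · push_neg at ha
    by_cases hb : ∃ j, b ^ 2 = v j ^ 2
    · obtain ⟨j, hj⟩ := hb
      rw [hg2 a ha, hg1 b j hj] at hab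
      have hsq : r' ^ 2 * a ^ 2 = m' j ^ 2 * b ^ 2 := by
        have := congrArg (· ^ 2) hab
        simp only [mul_pow] at this
        exact this
      rw [hj, key j] at hsq
      exact absurd (mul_left_cancel₀ (pow_ne_zero 2 hr') hsq) (ha (π j))
    · push_neg at hb
      rw [hg2 a ha, hg2 b hb] at hab
      exact mul_left_cancel₀ hr' hab

/-- Lemma 3.2.  Suppose `q` is odd and there are an integer `h ≥ 1`, permutations
`ρ, τ` of `{1,…,h}`, a vector `σ ∈ {±1}^h` and nonzero field elements
`r, m_i, v_i` with `σ(i)·m_i·v_i = r·v_{ρ(i)}` and `(m_i - 1)·v_i = (r - 1)·v_{τ(i)}`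
for all `i`, and `(m_1 - r)·∏_{i≥2}(m_1 - m_i)·∏_{i<j}(v_i² - v_j²) ≠ 0`.
Then `𝒟_{(q-1)/2}(q)` is nonempty. -/
theorem lemma_evanscond {F : Type*} [Field F] [Fintype F]
    (hodd : Odd (Fintype.card F))
    (h : ℕ) (hh : 0 < h) (ρ τ : Equiv.Perm (Fin h))
    (σ : Fin h → F) (hσ : ∀ i, σ i = 1 ∨ σ i = -1)
    (r : F) (hr : r ≠ 0)
    (m v : Fin h → F) (hm : ∀ i, m i ≠ 0) (hv : ∀ i, v i ≠ 0)
    (h1 : ∀ i, σ i * m i * v i = r * v (ρ i))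
    (h2 : ∀ i, (m i - 1) * v i = (r - 1) * v (τ i))
    (h3 : (m ⟨0, hh⟩ - r) *
        (∏ i ∈ Finset.univ.filter (fun i : Fin h => i ≠ ⟨0, hh⟩), (m ⟨0, hh⟩ - m i)) *
        (∏ p ∈ Finset.univ.filter (fun p : Fin h × Fin h => p.1 < p.2),
          (v p.1 ^ 2 - v p.2 ^ 2)) ≠ 0) :
    ∃ θ : F → F, IsLeastCycOrthomorphism ((Fintype.card F - 1) / 2) θ := by
  classical
  set i0 : Fin h := ⟨0, hh⟩ with hi0
  -- extract pieces of h3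
  rw [mul_ne_zero_iff, mul_ne_zero_iff] at h3
  obtain ⟨⟨hA, hB⟩, hC⟩ := h3
  have dist : ∀ i j, v i ^ 2 = v j ^ 2 → i = j := by
    intro i j hij
    by_contra hne
    rcases lt_or_gt_of_ne hne with hlt | hgt
    · have := Finset.prod_ne_zero_iff.mp hC (i, j) (by simp [hlt])
      exact this (by rw [hij]; ring)
    · have := Finset.prod_ne_zero_iff.mp hC (j, i) (by simp [hgt])
      exact this (by rw [hij]; ring)
  have hBm : ∀ i, i ≠ i0 → m i0 - m i ≠ 0 := by
    intro i hi
    exact Finset.prod_ne_zero_iff.mp hB i (by simp [hi])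
  -- r ≠ 1 and m i ≠ 1
  have hr1 : r - 1 ≠ 0 := by
    intro hr1
    have e := h2 i0
    rw [hr1, zero_mul] at e
    have hre : r = 1 := sub_eq_zero.mp hr1
    have hme : m i0 = 1 := sub_eq_zero.mp ((mul_eq_zero.mp e).resolve_right (hv i0))
    exact hA (by rw [hre, hme, sub_self])
  have hm1 : ∀ i, m i - 1 ≠ 0 := by
    intro i hmi
    have := h2 i
    rw [hmi, zero_mul] at this
    rcases mul_eq_zero.mp this.symm with h' | h'
    · exact hr1 h'
    · exact hv (τ i) h'
  -- squared key identities
  have key1 : ∀ i, m i ^ 2 * v i ^ 2 = r ^ 2 * v (ρ i) ^ 2 := by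
    intro i
    have hσ2 : σ i ^ 2 = 1 := by rcases hσ i with h' | h' <;> rw [h'] <;> ring
    calc m i ^ 2 * v i ^ 2 = σ i ^ 2 * (m i ^ 2 * v i ^ 2) := by rw [hσ2, one_mul]
      _ = (σ i * m i * v i) ^ 2 := by ring
      _ = (r * v (ρ i)) ^ 2 := by rw [h1 i]
      _ = r ^ 2 * v (ρ i) ^ 2 := by ring
  have key2 : ∀ i, (m i - 1) ^ 2 * v i ^ 2 = (r - 1) ^ 2 * v (τ i) ^ 2 := by
    intro i
    calc (m i - 1) ^ 2 * v i ^ 2 = ((m i - 1) * v i) ^ 2 := by ring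
      _ = ((r - 1) * v (τ i)) ^ 2 := by rw [h2 i]
      _ = (r - 1) ^ 2 * v (τ i) ^ 2 := by ring
  -- the orthomorphism
  set θ : F → F := fun x =>
    if hx : ∃ i, x ^ 2 = v i ^ 2 then m hx.choose * x else r * x with hθ
  have hg1 : ∀ x (i : Fin h), x ^ 2 = v i ^ 2 → θ x = m i * x := by
    intro x i hxi
    have hx : ∃ i, x ^ 2 = v i ^ 2 := ⟨i, hxi⟩
    rw [hθ]
    simp only [dif_pos hx]
    have : hx.choose = i := dist _ _ (by rw [← hx.choose_spec, hxi])
    rw [this]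
  have hg2 : ∀ x, (∀ i, x ^ 2 ≠ v i ^ 2) → θ x = r * x := by
    intro x hx
    rw [hθ]
    simp only [dif_neg (not_exists.mpr hx)]
  have hθ0 : θ 0 = 0 := by
    rw [hg2 0 (fun i hi => hv i (pow_eq_zero_iff (n := 2) (by norm_num) |>.mp
      (by rw [← hi]; ring))), mul_zero]
  -- bijectivity of θ
  have hθbij : Function.Bijective θ :=
    Finite.injective_iff_bijective.mp
      (inj_aux v dist r hr m hm ρ ρ.injective key1 θ hg1 hg2)
  -- bijectivity of θ - id
  have hψbij : Function.Bijective (fun x => θ x - x) := by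
    apply Finite.injective_iff_bijective.mp
    apply inj_aux v dist (r - 1) hr1 (fun i => m i - 1) hm1 τ τ.injective key2
    · intro x i hxi
      rw [hg1 x i hxi]; ring
    · intro x hx
      rw [hg2 x hx]; ring
  -- multiplier constant on {x, -x}
  have hsqmul : ∀ x y : F, x ^ 2 = y ^ 2 → θ x * y = θ y * x := by
    intro x y hxy
    by_cases hy : ∃ i, y ^ 2 = v i ^ 2
    · obtain ⟨i, hi⟩ := hy
      rw [hg1 x i (hxy.trans hi), hg1 y i hi]; ring
    · push_neg at hy
      rw [hg2 x (fun i => hxy ▸ hy i), hg2 y hy]; ring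
  -- numerics
  obtain ⟨t, ht⟩ := hodd
  have hcard : 2 ≤ Fintype.card F := Fintype.one_lt_card
  have hk : (Fintype.card F - 1) / 2 = t := by omega
  have hkpos : 0 < t := by omega
  have h2k : t + t = Fintype.card F - 1 := by omega
  refine ⟨θ, ⟨⟨hθbij, hψbij⟩, hθ0, ?_⟩, ?_⟩
  · -- cyclotomic of index (q-1)/2
    intro x y hx hy ⟨z, hz⟩
    rw [hk] at hz
    have hz0 : z ≠ 0 := by
      intro hz0
      rw [hz0, zero_pow hkpos.ne', zero_mul] at hz
      exact hx hz
    have hzk : z ^ t * z ^ t = 1 := by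
      rw [← pow_add, h2k]
      exact FiniteField.pow_card_sub_one_eq_one z hz0
    rcases mul_self_eq_one_iff.mp hzk with h' | h'
    · rw [hz, h', one_mul]
    · apply hsqmul
      rw [hz, h']; ring
  · -- least index
    intro ℓ hℓlt hℓdvd hcyc
    have hℓpos : 0 < ℓ := by
      rcases Nat.eq_zero_or_pos ℓ with h' | h'
      · subst h'
        have := Nat.eq_zero_of_zero_dvd hℓdvd
        omega
      · exact h'
    rw [hk] at hℓlt
    -- get a generator of Fˣ
    obtain ⟨g, hg⟩ := IsCyclic.exists_generator (α := Fˣ)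
    have hog : orderOf g = Fintype.card F - 1 := by
      rw [orderOf_eq_card_of_forall_mem_zpowers hg]
      simp [Nat.card_eq_fintype_card, Fintype.card_units]
    have hogl : orderOf (g ^ ℓ) = (Fintype.card F - 1) / ℓ := by
      rw [orderOf_pow, hog, Nat.gcd_eq_right hℓdvd]
    have hbig : 2 < (Fintype.card F - 1) / ℓ := by
      obtain ⟨c, hc⟩ := hℓdvd
      rw [hc, Nat.mul_div_cancel_left _ hℓpos]
      by_contra hle
      push_neg at hle
      interval_cases c <;> omega
    have hne1 : (g ^ ℓ) ^ 2 ≠ 1 := by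
      intro he
      have := orderOf_dvd_of_pow_eq_one he
      rw [hogl] at this
      have := Nat.le_of_dvd (by norm_num) this
      omega
    have hu2 : ((g : F) ^ ℓ) ^ 2 ≠ 1 := by
      intro he
      apply hne1
      ext
      push_cast
      exact he
    set x : F := (g : F) ^ ℓ * v i0 with hxdef
    have hx0 : x ≠ 0 := mul_ne_zero (pow_ne_zero _ (Units.ne_zero g)) (hv i0)
    have hxv : x ^ 2 ≠ v i0 ^ 2 := by
      intro he
      apply hu2
      have e2 : ((g : F) ^ ℓ) ^ 2 * v i0 ^ 2 = x ^ 2 := by rw [hxdef]; ring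
      rw [he] at e2
      have e3 : ((g : F) ^ ℓ) ^ 2 * v i0 ^ 2 = 1 * v i0 ^ 2 := by rw [one_mul, e2]
      exact mul_right_cancel₀ (pow_ne_zero 2 (hv i0)) e3
    have hcomm := hcyc.2.2 x (v i0) hx0 (hv i0) ⟨(g : F), rfl⟩
    rw [hg1 (v i0) i0 rfl] at hcomm
    have hθx : θ x = m i0 * x := by
      apply mul_right_cancel₀ (hv i0)
      rw [hcomm]; ring
    by_cases hex : ∃ i, x ^ 2 = v i ^ 2
    · obtain ⟨i, hi⟩ := hex
      have hii0 : i ≠ i0 := fun he => hxv (he ▸ hi)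
      have := hg1 x i hi
      rw [hθx] at this
      have hmm : m i0 = m i := mul_right_cancel₀ hx0 this
      exact hBm i hii0 (by rw [hmm, sub_self])
    · push_neg at hex
      have := hg2 x hex
      rw [hθx] at this
      exact hA (by rw [mul_right_cancel₀ hx0 this, sub_self])
end

section
/- For every prime power q > 5, there exists a non-cyclotomic orthomorphism over F_q; that is, there is an orthomorphism θ over F_q with θ(0) = 0 such that θ ∉ 𝒞_ℓ(q) for every ℓ < q−1 dividing q−1 (equivalently, 𝒟_{q−1}(q) is nonempty). -/
/-!
An orthomorphism `θ` with `θ 0 = 0` always lies in `𝒞_{q-1}(q)`. If some value of the ratio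
`θ x / x` is taken at a single point `x₀`, then `θ` lies in no `𝒞_ℓ(q)` with `ℓ ∣ q - 1`,
`ℓ < q - 1`: some `z` has `z ^ ℓ ≠ 1`, and `z ^ ℓ x₀ ≠ x₀` lies in the coset of `x₀`.

If `q - 1` is not prime, take `μ` of order `m` with `3 ≤ m < q - 1` and `t` with `-t ∉ ⟨μ⟩`.
The rotation `σ x = μ (x - t) + t` permutes the orbit `S = t + ⟨μ⟩ ∌ 0`, and
`θ = (μ⁻¹ + 1) · (σ on S, id off S)` is an orthomorphism because
`θ x - x = μ⁻¹ · (σ² on S, id off S)`. The ratio `θ x / x` at `x₀ = t + 1` is taken only there.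

If `q - 1` is prime, `q` is even and only `ℓ = 1` has to be excluded, i.e. `θ x / x` must not be
constant. For `a ≠ 0` with `a³ ≠ 1` and `w = a² + a + 1`, take `θ = a · (1 a²)(a w)`: in
characteristic `2`, `θ x - x = (a + 1) · (1 w)(a² a) x`, while `θ 1 / 1 = a³` differs from
`θ y / y = a` at any `y` outside `{0, 1, a, a², w}`.
-/

open Function Set

theorem FiniteField.exists_pow_ne_one {F : Type*} [Field F] [Fintype F] {ℓ : ℕ} (h0 : 0 < ℓ)
    (hlt : ℓ < Fintype.card F - 1) : ∃ z : Fˣ, z ^ ℓ ≠ 1 := by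
  by_contra! h
  exact Nat.not_dvd_of_pos_of_lt h0 hlt ((FiniteField.forall_pow_eq_one_iff F ℓ).1 h)

section Cyclotomic

variable {F : Type*} [Field F] [Fintype F] {θ : F → F}

theorem IsOrthomorphism.isCycOrthomorphism_card_sub_one (hθ : IsOrthomorphism θ)
    (h0 : θ 0 = 0) : IsCycOrthomorphism (Fintype.card F - 1) θ := by
  refine ⟨hθ, h0, ?_⟩
  rintro x y hx - ⟨z, rfl⟩
  have hz : z ≠ 0 := by
    rintro rfl
    exact hx (by rw [zero_pow (Nat.sub_ne_zero_of_lt Fintype.one_lt_card), zero_mul])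
  rw [FiniteField.pow_card_sub_one_eq_one z hz, one_mul]

theorem IsOrthomorphism.isLeastCycOrthomorphism_of_ratio_unique (hθ : IsOrthomorphism θ)
    (h0 : θ 0 = 0) {x₀ : F} (hx₀ : x₀ ≠ 0)
    (huniq : ∀ y, y ≠ 0 → θ y * x₀ = θ x₀ * y → y = x₀) :
    IsLeastCycOrthomorphism (Fintype.card F - 1) θ := by
  refine ⟨hθ.isCycOrthomorphism_card_sub_one h0, fun ℓ hlt hdvd hcyc => ?_⟩
  have hℓ : 0 < ℓ := Nat.pos_of_ne_zero (by rintro rfl; exact hlt.ne' (zero_dvd_iff.1 hdvd))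
  obtain ⟨z, hz⟩ := FiniteField.exists_pow_ne_one hℓ hlt
  have hzx₀ : (z : F) ^ ℓ * x₀ ≠ 0 := mul_ne_zero (pow_ne_zero _ z.ne_zero) hx₀
  have hfix := huniq _ hzx₀ (hcyc.2.2 _ x₀ hzx₀ hx₀ ⟨z, rfl⟩)
  rw [Ne, ← Units.val_eq_one, Units.val_pow_eq_pow_val] at hz
  exact hz (mul_right_cancel₀ hx₀ (hfix.trans (one_mul x₀).symm))

theorem IsOrthomorphism.isLeastCycOrthomorphism_of_prime (hp : (Fintype.card F - 1).Prime)
    (hθ : IsOrthomorphism θ) (h0 : θ 0 = 0) {x y : F} (hx : x ≠ 0) (hy : y ≠ 0)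
    (hxy : θ x * y ≠ θ y * x) : IsLeastCycOrthomorphism (Fintype.card F - 1) θ := by
  refine ⟨hθ.isCycOrthomorphism_card_sub_one h0, fun ℓ hlt hdvd hcyc => ?_⟩
  obtain rfl : ℓ = 1 := (hp.eq_one_or_self_of_dvd ℓ hdvd).resolve_right hlt.ne
  exact hxy (hcyc.2.2 x y hx hy ⟨x / y, by field_simp⟩)

end Cyclotomic

theorem injective_piecewise_id_of_mapsTo {α : Type*} {s : Set α} [∀ x, Decidable (x ∈ s)]
    {f : α → α} (hf : Injective f) (hs : MapsTo f s s) : Injective (s.piecewise f id) :=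
  (injective_piecewise_iff _).2
    ⟨hf.injOn, injOn_id _, fun _ hx _ hy hxy => hy (by rw [id] at hxy; exact hxy ▸ hs hx)⟩

section Rotation

variable {F : Type*} [Field F] (μ t : F)

def rotationAbout (x : F) : F := μ * (x - t) + t

def rotationOrbit : Set F := range fun n : ℕ => t + μ ^ n

open Classical in
noncomputable def rotationOrthomorphism (x : F) : F :=
  (μ⁻¹ + 1) * (rotationOrbit μ t).piecewise (rotationAbout μ t) id x

variable {μ t}

theorem add_pow_mem_rotationOrbit (n : ℕ) : t + μ ^ n ∈ rotationOrbit μ t := ⟨n, rfl⟩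

theorem rotationAbout_add_pow (n : ℕ) : rotationAbout μ t (t + μ ^ n) = t + μ ^ (n + 1) := by
  rw [rotationAbout, pow_succ]; ring

theorem mapsTo_rotationAbout :
    MapsTo (rotationAbout μ t) (rotationOrbit μ t) (rotationOrbit μ t) := by
  rintro _ ⟨n, rfl⟩
  exact ⟨n + 1, (rotationAbout_add_pow n).symm⟩

theorem rotationAbout_injective (hμ : μ ≠ 0) : Injective (rotationAbout μ t) := fun x y h => by
  simpa [rotationAbout, hμ] using h

theorem rotationOrthomorphism_add_pow (n : ℕ) :
    rotationOrthomorphism μ t (t + μ ^ n) = (μ⁻¹ + 1) * (t + μ ^ (n + 1)) := by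
  classical
  rw [rotationOrthomorphism, piecewise_eq_of_mem _ _ _ (add_pow_mem_rotationOrbit n),
    rotationAbout_add_pow]

theorem rotationOrthomorphism_of_notMem {x : F} (hx : x ∉ rotationOrbit μ t) :
    rotationOrthomorphism μ t x = (μ⁻¹ + 1) * x := by
  classical
  rw [rotationOrthomorphism, piecewise_eq_of_notMem _ _ _ hx, id]

open Classical in
theorem rotationOrthomorphism_sub_self (hμ : μ ≠ 0) (x : F) :
    rotationOrthomorphism μ t x - x =
      μ⁻¹ * (rotationOrbit μ t).piecewise (rotationAbout μ t ∘ rotationAbout μ t) id x := by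
  by_cases hx : x ∈ rotationOrbit μ t
  · obtain ⟨n, rfl⟩ := hx
    rw [rotationOrthomorphism_add_pow, piecewise_eq_of_mem _ _ _ (add_pow_mem_rotationOrbit n),
      comp_apply, rotationAbout_add_pow, rotationAbout_add_pow]
    field_simp
    ring
  · rw [rotationOrthomorphism_of_notMem hx, piecewise_eq_of_notMem _ _ _ hx, id]
    field_simp
    ring

theorem inv_add_one_ne_zero (hμ2 : μ ^ 2 ≠ 1) : μ⁻¹ + 1 ≠ 0 := by
  grind

theorem isOrthomorphism_rotationOrthomorphism [Fintype F] (hμ : μ ≠ 0) (hμ2 : μ ^ 2 ≠ 1) :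
    IsOrthomorphism (rotationOrthomorphism μ t) := by
  classical
  have hσ := rotationAbout_injective (t := t) hμ
  refine ⟨Finite.injective_iff_bijective.1 ?_, Finite.injective_iff_bijective.1 ?_⟩
  · exact (mul_right_injective₀ (inv_add_one_ne_zero hμ2)).comp
      (injective_piecewise_id_of_mapsTo hσ mapsTo_rotationAbout)
  · rw [funext (rotationOrthomorphism_sub_self hμ)]
    exact (mul_right_injective₀ (inv_ne_zero hμ)).comp
      (injective_piecewise_id_of_mapsTo (hσ.comp hσ)
        (mapsTo_rotationAbout.comp mapsTo_rotationAbout))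

theorem rotationOrthomorphism_zero (ht : ∀ n : ℕ, t + μ ^ n ≠ 0) :
    rotationOrthomorphism μ t 0 = 0 := by
  rw [rotationOrthomorphism_of_notMem (by rintro ⟨n, hn⟩; exact ht n hn), mul_zero]

theorem rotationOrthomorphism_ratio_unique (hμ2 : μ ^ 2 ≠ 1) (ht0 : t ≠ 0) {y : F}
    (hy : y ≠ 0)
    (h : rotationOrthomorphism μ t y * (t + 1) = rotationOrthomorphism μ t (t + 1) * y) :
    y = t + 1 := by
  have ha := inv_add_one_ne_zero hμ2
  have hμ1 : 1 - μ ≠ 0 := by grind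
  rw [← pow_zero μ, rotationOrthomorphism_add_pow, zero_add, pow_one] at h
  by_cases hyS : y ∈ rotationOrbit μ t
  · obtain ⟨n, rfl⟩ := hyS
    rw [rotationOrthomorphism_add_pow] at h
    have h' : (t + μ ^ (n + 1)) * (t + μ ^ 0) = (t + μ) * (t + μ ^ n) :=
      mul_left_cancel₀ ha (by linear_combination h)
    have hn : t * (1 - μ) * (1 - μ ^ n) = 0 := by linear_combination h'
    simp only [mul_eq_zero, ht0, hμ1, false_or, sub_eq_zero] at hn
    change t + μ ^ n = t + 1
    rw [← hn]
  · rw [rotationOrthomorphism_of_notMem hyS] at h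
    have h' : (μ⁻¹ + 1) * y * (1 - μ) = 0 := by linear_combination h
    simp [ha, hy, hμ1] at h'

theorem isLeastCycOrthomorphism_rotationOrthomorphism [Fintype F] (hμ : μ ≠ 0)
    (hμ2 : μ ^ 2 ≠ 1) (ht0 : t ≠ 0) (ht : ∀ n : ℕ, t + μ ^ n ≠ 0) :
    IsLeastCycOrthomorphism (Fintype.card F - 1) (rotationOrthomorphism μ t) :=
  (isOrthomorphism_rotationOrthomorphism hμ hμ2).isLeastCycOrthomorphism_of_ratio_unique
    (rotationOrthomorphism_zero ht) (by simpa using ht 0)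
    fun _ hy h => rotationOrthomorphism_ratio_unique hμ2 ht0 hy h

end Rotation

theorem Nat.exists_dvd_three_le_lt {n : ℕ} (h5 : 5 ≤ n) (hn : ¬ n.Prime) :
    ∃ m, m ∣ n ∧ 3 ≤ m ∧ m < n := by
  have h6 : 6 ≤ n := by
    by_contra h
    exact hn (by rw [show n = 5 by omega]; norm_num)
  obtain ⟨m, hmn, hm2, hmlt⟩ := Nat.exists_dvd_of_not_prime2 (by omega) hn
  rcases hm2.eq_or_lt with rfl | hm3
  · exact ⟨n / 2, Nat.div_dvd_of_dvd hmn, by omega, by omega⟩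
  · exact ⟨m, hmn, hm3, hmlt⟩

theorem exists_rotation_parameters {F : Type*} [Field F] [Fintype F]
    (hq : 5 < Fintype.card F) (hn : ¬ (Fintype.card F - 1).Prime) :
    ∃ μ t : F, μ ≠ 0 ∧ μ ^ 2 ≠ 1 ∧ t ≠ 0 ∧ ∀ n : ℕ, t + μ ^ n ≠ 0 := by
  obtain ⟨m, hmdvd, hm3, hmlt⟩ := Nat.exists_dvd_three_le_lt (by omega) hn
  obtain ⟨g, hg⟩ := IsCyclic.exists_ofOrder_eq_natCard (α := Fˣ)
  rw [Nat.card_units, Nat.card_eq_fintype_card] at hg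
  set μ := g ^ (orderOf g / m)
  have hμ : orderOf μ = m := orderOf_pow_orderOf_div (by omega) (hg ▸ hmdvd)
  have hμ_ne_top : Subgroup.zpowers μ ≠ ⊤ := fun htop => by
    have hcard := Nat.card_zpowers μ
    rw [htop, Subgroup.card_top, Nat.card_units, Nat.card_eq_fintype_card] at hcard
    omega
  obtain ⟨u, -, hu⟩ := SetLike.exists_of_lt (lt_top_iff_ne_top.2 hμ_ne_top)
  refine ⟨μ, -u, μ.ne_zero, ?_, neg_ne_zero.2 u.ne_zero, fun n hn => hu ⟨n, ?_⟩⟩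
  · have := pow_ne_one_of_lt_orderOf two_ne_zero (hμ ▸ hm3 : 2 < orderOf μ)
    rwa [← Units.val_pow_eq_pow_val, Ne, Units.val_eq_one]
  · ext
    simp only [zpow_natCast, Units.val_pow_eq_pow_val]
    linear_combination hn

section CharTwo

variable {F : Type*} [Field F] (a : F)

open Classical in
noncomputable def swapOrthomorphism (x : F) : F :=
  a * Equiv.swap 1 (a ^ 2) (Equiv.swap a (a ^ 2 + a + 1) x)

variable {a}

theorem swapOrthomorphism_of_ne {x : F} (hx1 : x ≠ 1) (hxa : x ≠ a) (hxa2 : x ≠ a ^ 2)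
    (hxw : x ≠ a ^ 2 + a + 1) : swapOrthomorphism a x = a * x := by
  classical
  rw [swapOrthomorphism, Equiv.swap_apply_of_ne_of_ne hxa hxw,
    Equiv.swap_apply_of_ne_of_ne hx1 hxa2]

variable [CharP F 2]

theorem swapOrthomorphism_sub_self [DecidableEq F] (x : F) :
    swapOrthomorphism a x - x =
      (a + 1) * Equiv.swap 1 (a ^ 2 + a + 1) (Equiv.swap (a ^ 2) a x) := by
  have h2 : (2 : F) = 0 := CharTwo.two_eq_zero
  simp only [swapOrthomorphism, Equiv.swap_apply_def]
  split_ifs <;> grind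

theorem swapOrthomorphism_one : swapOrthomorphism a 1 = a ^ 3 := by
  classical
  have h2 : (2 : F) = 0 := CharTwo.two_eq_zero
  simp only [swapOrthomorphism, Equiv.swap_apply_def]
  split_ifs <;> grind

theorem swapOrthomorphism_zero (ha0 : a ≠ 0) (ha3 : a ^ 3 ≠ 1) :
    swapOrthomorphism a 0 = 0 := by
  have h2 : (2 : F) = 0 := CharTwo.two_eq_zero
  rw [swapOrthomorphism_of_ne (by grind) (by grind) (by grind) (by grind), mul_zero]

theorem isOrthomorphism_swapOrthomorphism [Fintype F] (ha0 : a ≠ 0) (ha1 : a ≠ 1) :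
    IsOrthomorphism (swapOrthomorphism a) := by
  classical
  have h2 : (2 : F) = 0 := CharTwo.two_eq_zero
  refine ⟨Finite.injective_iff_bijective.1 ?_, Finite.injective_iff_bijective.1 ?_⟩
  · exact (mul_right_injective₀ ha0).comp ((Equiv.injective _).comp (Equiv.injective _))
  · rw [funext swapOrthomorphism_sub_self]
    exact (mul_right_injective₀ (by grind)).comp ((Equiv.injective _).comp (Equiv.injective _))

end CharTwo

theorem exists_isLeastCycOrthomorphism_of_prime {F : Type*} [Field F] [Fintype F]
    (hq : 5 < Fintype.card F) (hp : (Fintype.card F - 1).Prime) :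
    ∃ θ : F → F, IsLeastCycOrthomorphism (Fintype.card F - 1) θ := by
  classical
  have : CharP F 2 := ringChar.of_eq (FiniteField.even_card_iff_char_two.2 (by
    have := hp.eq_two_or_odd
    omega))
  have h2 : (2 : F) = 0 := CharTwo.two_eq_zero
  obtain ⟨u, hu⟩ := FiniteField.exists_pow_ne_one (F := F) three_pos (by omega)
  set a : F := (u : F)
  have ha0 : a ≠ 0 := u.ne_zero
  have ha3 : a ^ 3 ≠ 1 := by rwa [Ne, ← Units.val_eq_one, Units.val_pow_eq_pow_val] at hu
  have ha1 : a ≠ 1 := by grind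
  obtain ⟨y, -, hy⟩ := Finset.exists_mem_notMem_of_card_lt_card
    (s := {0, 1, a, a ^ 2, a ^ 2 + a + 1}) (t := Finset.univ)
    (Finset.card_le_five.trans_lt (by rwa [Finset.card_univ]))
  simp only [Finset.mem_insert, Finset.mem_singleton, not_or] at hy
  obtain ⟨hy0, hy1, hya, hya2, hyw⟩ := hy
  refine ⟨swapOrthomorphism a,
    (isOrthomorphism_swapOrthomorphism ha0 ha1).isLeastCycOrthomorphism_of_prime hp
      (swapOrthomorphism_zero ha0 ha3) one_ne_zero hy0 ?_⟩
  rw [swapOrthomorphism_one, swapOrthomorphism_of_ne hy1 hya hya2 hyw]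
  grind

/-- Theorem 3.4.  For every prime power `q > 5` there is a non-cyclotomic
orthomorphism over `F_q`: an orthomorphism (with `θ 0 = 0`) lying in `𝒟_{q-1}(q)`,
i.e. not in `𝒞_ℓ(q)` for any `ℓ < q - 1` dividing `q - 1`. -/
theorem thm_q_minus_1 {F : Type*} [Field F] [Fintype F]
    (hq : 5 < Fintype.card F) :
    ∃ θ : F → F, IsLeastCycOrthomorphism (Fintype.card F - 1) θ := by
  by_cases hp : (Fintype.card F - 1).Prime
  · exact exists_isLeastCycOrthomorphism_of_prime hq hp
  · obtain ⟨μ, t, hμ, hμ2, ht0, ht⟩ := exists_rotation_parameters hq hp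
    exact ⟨_, isLeastCycOrthomorphism_rotationOrthomorphism hμ hμ2 ht0 ht⟩
end

section
/- Let q = 2^{2k+1} for some positive integer k, and let F_q be the field of order q. Then there exists an irregular orthomorphism over F_q, i.e. an orthomorphism θ such that for every g ∈ F_q the translate T_g[θ] is non-cyclotomic (lies in 𝒟_{q−1}(q)). -/
lemma exists_two_missing {F : Type*} [Fintype F] [DecidableEq F] (f : F → F)
    (t u x y : F) (htu : t ≠ u) (hxy : x ≠ y) (h1 : f t = f u) (h2 : f x = f y)
    (hv : f t ≠ f x) :
    ∃ d₁ d₂ : F, d₁ ≠ d₂ ∧ (∀ z, f z ≠ d₁) ∧ (∀ z, f z ≠ d₂) := by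
  classical
  have huy : u ≠ y := by
    intro h; apply hv; rw [h1, h, ← h2]
  have hty : t ≠ y := by
    intro h; apply hv; rw [h, h2]
  have hxu : x ≠ u := by
    intro h; apply hv; rw [h1, ← h]
  set R : Finset F := Finset.image f Finset.univ with hR
  have hsub : R ⊆ Finset.image f (Finset.univ \ {u, y}) := by
    intro r hr
    obtain ⟨z, _, hz⟩ := Finset.mem_image.mp hr
    by_cases hzu : z = u
    · exact Finset.mem_image.mpr ⟨t, by simp [Finset.mem_sdiff, htu, hty], by
        rw [h1, ← hzu, hz]⟩
    · by_cases hzy : z = y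
      · exact Finset.mem_image.mpr ⟨x, by simp [Finset.mem_sdiff, hxu, hxy], by
          rw [h2, ← hzy, hz]⟩
      · exact Finset.mem_image.mpr ⟨z, by simp [Finset.mem_sdiff, hzu, hzy], hz⟩
  have hcard2 : ({u, y} : Finset F).card = 2 := by
    rw [Finset.card_insert_of_notMem (by simp [huy]), Finset.card_singleton]
  have hRcard : R.card ≤ Fintype.card F - 2 := by
    calc R.card ≤ (Finset.univ \ {u, y}).card :=
          le_trans (Finset.card_le_card hsub) (Finset.card_image_le)
      _ = Fintype.card F - 2 := by
          rw [Finset.card_sdiff_of_subset (Finset.subset_univ _), Finset.card_univ, hcard2]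
  have hcompl : 1 < (Finset.univ \ R).card := by
    rw [Finset.card_sdiff_of_subset (Finset.subset_univ _), Finset.card_univ]
    have h2le : 2 ≤ Fintype.card F := by
      have : ({u, y} : Finset F).card ≤ Fintype.card F := by
        rw [← Finset.card_univ]; exact Finset.card_le_card (Finset.subset_univ _)
      omega
    omega
  obtain ⟨d₁, hd₁, d₂, hd₂, hne⟩ := Finset.one_lt_card.mp hcompl
  refine ⟨d₁, d₂, hne, ?_, ?_⟩
  · intro z hz
    have : d₁ ∈ R := Finset.mem_image.mpr ⟨z, Finset.mem_univ _, hz⟩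
    exact (Finset.mem_sdiff.mp hd₁).2 this
  · intro z hz
    have : d₂ ∈ R := Finset.mem_image.mpr ⟨z, Finset.mem_univ _, hz⟩
    exact (Finset.mem_sdiff.mp hd₂).2 this


lemma char_two_of_card {F : Type*} [Field F] [Fintype F] (k : ℕ)
    (hq : Fintype.card F = 2 ^ (2 * k + 1)) : CharP F 2 := by
  obtain ⟨p, hc⟩ := CharP.exists F
  haveI := hc
  obtain ⟨n, hp, hcard⟩ := FiniteField.card F p
  have hpd : p ∣ 2 ^ (2 * k + 1) := by
    rw [← hq, hcard]
    exact dvd_pow_self p n.ne_zero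
  have hp2 : p ∣ 2 := hp.dvd_of_dvd_pow hpd
  have : p = 2 := (Nat.prime_dvd_prime_iff_eq hp Nat.prime_two).mp hp2
  rwa [this] at hc

lemma cube_bij {F : Type*} [Field F] [Fintype F]
    (h3 : ¬ (3:ℕ) ∣ (Fintype.card F - 1)) :
    Function.Bijective (fun x : F => x ^ 3) := by
  rw [← Finite.injective_iff_bijective]
  intro x y hxy
  simp only at hxy
  by_cases hy : y = 0
  · subst hy
    rw [zero_pow (by norm_num)] at hxy
    exact pow_eq_zero_iff (by norm_num) |>.mp hxy
  · have hx : x ≠ 0 := by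
      intro h; subst h
      rw [zero_pow (by norm_num)] at hxy
      exact hy (pow_eq_zero_iff (by norm_num) |>.mp hxy.symm)
    have hne : x * y⁻¹ ≠ 0 := mul_ne_zero hx (inv_ne_zero hy)
    have ht : (x * y⁻¹) ^ 3 = 1 := by
      rw [mul_pow, hxy, inv_pow]
      field_simp
    have hord : orderOf (x * y⁻¹) ∣ 3 := orderOf_dvd_of_pow_eq_one ht
    have hord2 : orderOf (x * y⁻¹) ∣ Fintype.card F - 1 :=
      orderOf_dvd_of_pow_eq_one (FiniteField.pow_card_sub_one_eq_one _ hne)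
    rcases (Nat.prime_three.eq_one_or_self_of_dvd _ hord) with h | h
    · have h1 : x * y⁻¹ = 1 := orderOf_eq_one_iff.mp h
      field_simp at h1
      exact h1
    · rw [h] at hord2
      exact absurd hord2 h3



/-- Theorem 3.5.  If `q = 2^(2k+1)` for a positive integer `k`, then there is an
irregular orthomorphism over `F_q`: an orthomorphism `θ` all of whose translates
`T_g[θ] : x ↦ θ(x + g) - θ(g)` are non-cyclotomic, i.e. lie in `𝒟_{q-1}(q)`. -/
theorem thm_irregular {F : Type*} [Field F] [Fintype F]
    (k : ℕ) (hk : 0 < k) (hq : Fintype.card F = 2 ^ (2 * k + 1)) :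
    ∃ θ : F → F, IsOrthomorphism θ ∧
      ∀ g : F, IsLeastCycOrthomorphism (Fintype.card F - 1)
        (fun x => θ (x + g) - θ g) := by
  classical
  haveI hp2 : CharP F 2 := char_two_of_card k hq
  have htwo : (2:F) = 0 := by exact_mod_cast CharP.cast_eq_zero F 2
  have hq8 : 8 ≤ Fintype.card F := by
    rw [hq]
    calc (8:ℕ) = 2 ^ 3 := by norm_num
      _ ≤ 2 ^ (2 * k + 1) := Nat.pow_le_pow_right (by norm_num) (by omega)
  have h3 : ¬ (3:ℕ) ∣ (Fintype.card F - 1) := by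
    rw [hq]
    have h4k : 4 ^ k % 3 = 1 := by
      rw [Nat.pow_mod]; norm_num
    have hpow : 2 ^ (2 * k + 1) = 4 ^ k * 2 := by
      rw [pow_succ, pow_mul]; norm_num
    have hmod : 2 ^ (2 * k + 1) % 3 = 2 := by
      rw [hpow, Nat.mul_mod, h4k]
    have hge : 2 ^ (2 * k + 1) ≥ 8 := by rw [← hq]; exact hq8
    omega
  have hcube := cube_bij h3
  have hcubeinj : ∀ x y : F, x ^ 3 = y ^ 3 → x = y := fun x y h => hcube.1 h
  -- squaring is bijective
  have hsqinj : ∀ x y : F, x ^ 2 = y ^ 2 → x = y := by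
    intro x y h
    have hz : (x - y) ^ 2 = 0 := by linear_combination h + (y ^ 2 - x * y) * htwo
    have := pow_eq_zero_iff (n := 2) (by norm_num) |>.mp hz
    exact sub_eq_zero.mp this
  have hsq : Function.Bijective (fun x : F => x ^ 2) := by
    rw [← Finite.injective_iff_bijective]
    intro x y h; exact hsqinj x y h
  -- w^4 = w implies w ∈ {0,1}
  have h4 : ∀ w : F, w ^ 4 = w → w = 0 ∨ w = 1 := by
    intro w hw
    by_cases h0 : w = 0
    · exact Or.inl h0
    · right
      apply hcubeinj
      rw [one_pow]
      have hmul : w * w ^ 3 = w * 1 := by rw [mul_one, ← pow_succ']; exact hw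
      exact mul_left_cancel₀ h0 hmul
  -- an element outside {0,1}
  have hex01 : ∃ w : F, w ≠ 0 ∧ w ≠ 1 := by
    have hcard : ({0, 1} : Finset F).card ≤ 2 := Finset.card_insert_le _ _ |>.trans (by simp)
    have hne : (Finset.univ \ ({0, 1} : Finset F)).Nonempty := by
      apply Finset.card_pos.mp
      rw [Finset.card_sdiff_of_subset (Finset.subset_univ _), Finset.card_univ]
      omega
    obtain ⟨w, hw⟩ := hne
    rw [Finset.mem_sdiff, Finset.mem_insert, Finset.mem_singleton] at hw
    exact ⟨w, fun h => hw.2 (Or.inl h), fun h => hw.2 (Or.inr h)⟩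
  obtain ⟨w₀, hw0, hw1⟩ := hex01
  have hw01 : w₀ * (w₀ - 1) ≠ 0 := mul_ne_zero hw0 (sub_ne_zero.mpr hw1)
  -- c = w₀² + w₀ is outside {0,1}
  have hc0 : w₀ ^ 2 + w₀ ≠ 0 := by
    intro h
    apply hw01
    linear_combination h - w₀ * htwo
  have hc1 : w₀ ^ 2 + w₀ + 1 ≠ 0 := by
    intro h
    have hw4 : w₀ ^ 4 = w₀ := by
      linear_combination (w₀ ^ 2 - w₀) * h
    rcases h4 w₀ hw4 with h' | h' <;> [exact hw0 h'; exact hw1 h']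
  -- t with t² (w₀²+w₀+1) = 1
  obtain ⟨t, ht2⟩ := hsq.2 (w₀ ^ 2 + w₀ + 1)⁻¹
  simp only at ht2
  have hkey : t ^ 2 * (w₀ ^ 2 + w₀ + 1) = 1 := by
    rw [ht2]; exact inv_mul_cancel₀ hc1
  have ht0 : t ≠ 0 := by
    intro h; rw [h] at hkey; simp at hkey
  have ht1 : t ≠ 1 := by
    intro h
    rw [h] at hkey
    simp at hkey
    exact hc0 hkey
  set u : F := t * w₀ with hu
  have htu : t ≠ u := by
    intro h
    apply hw1
    have h' : t * w₀ = t * 1 := by rw [mul_one]; exact (h.trans hu).symm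
    exact mul_left_cancel₀ ht0 h'
  -- the map f z = z³ + z
  set f : F → F := fun z => z ^ 3 + z with hf
  have hftu : f t = f u := by
    show t ^ 3 + t = u ^ 3 + u
    rw [hu]
    linear_combination (-(t * (w₀ - 1))) * hkey + (t - t * w₀) * htwo
  have hf01 : f 0 = f 1 := by
    show (0:F) ^ 3 + 0 = 1 ^ 3 + 1
    rw [zero_pow (by norm_num), one_pow]
    linear_combination -htwo
  have hf0 : f 0 = 0 := by show (0:F) ^ 3 + 0 = 0; simp
  have hft : f t ≠ f 0 := by
    rw [hf0]
    show t ^ 3 + t ≠ 0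
    intro h
    apply ht1
    apply hsqinj
    rw [one_pow]
    have h2 : t * (t ^ 2 + 1) = 0 := by linear_combination h
    rcases mul_eq_zero.mp h2 with h' | h'
    · exact absurd h' ht0
    · linear_combination h' - htwo
  obtain ⟨d₁, d₂, hd12, hmiss₁, hmiss₂⟩ :=
    exists_two_missing f t u 0 1 htu (zero_ne_one) hftu hf01 hft
  -- build the coefficients
  have he : d₁ + d₂ ≠ 0 := by
    intro h
    exact hd12 (by linear_combination h - d₂ * htwo)
  obtain ⟨s, hs3⟩ := hcube.2 (d₁ + d₂)⁻¹
  simp only at hs3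
  have hs0 : s ≠ 0 := by
    intro h
    rw [h, zero_pow (by norm_num)] at hs3
    exact he (inv_eq_zero.mp hs3.symm)
  have hs3e : s ^ 3 * (d₁ + d₂) = 1 := by rw [hs3]; exact inv_mul_cancel₀ he
  set θ : F → F := fun x => x ^ 4 + s ^ 2 * x ^ 2 + d₁ * s ^ 3 * x with hθ
  have hθ0 : θ 0 = 0 := by show (0:F) ^ 4 + s ^ 2 * 0 ^ 2 + d₁ * s ^ 3 * 0 = 0; ring
  have hadd : ∀ x y : F, θ (x + y) = θ x + θ y := by
    intro x y
    show (x + y) ^ 4 + s ^ 2 * (x + y) ^ 2 + d₁ * s ^ 3 * (x + y) = _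
    linear_combination (2 * x ^ 3 * y + 3 * x ^ 2 * y ^ 2 + 2 * x * y ^ 3 + s ^ 2 * x * y) * htwo
  -- kernels
  have hker : ∀ z : F, θ z = 0 → z = 0 := by
    intro z hz
    by_contra hz0
    have hz3 : z ^ 3 + s ^ 2 * z + d₁ * s ^ 3 = 0 := by
      have : z * (z ^ 3 + s ^ 2 * z + d₁ * s ^ 3) = 0 := by
        have := hz; rw [hθ] at this; simp only at this; linear_combination this
      rcases mul_eq_zero.mp this with h | h
      · exact absurd h hz0
      · exact h
    have hzt : z = s * (z * s⁻¹) := by field_simp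
    have hprod : s ^ 3 * ((z * s⁻¹) ^ 3 + (z * s⁻¹) + d₁) = 0 := by
      rw [hzt] at hz3
      linear_combination hz3
    have hsol : (z * s⁻¹) ^ 3 + (z * s⁻¹) + d₁ = 0 := by
      rcases mul_eq_zero.mp hprod with h | h
      · exact absurd (pow_eq_zero_iff (by norm_num) |>.mp h) hs0
      · exact h
    exact hmiss₁ (z * s⁻¹) (by
      show (z * s⁻¹) ^ 3 + (z * s⁻¹) = d₁
      linear_combination hsol - d₁ * htwo)
  have hker' : ∀ z : F, θ z - z = 0 → z = 0 := by
    intro z hz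
    by_contra hz0
    have hz3 : z ^ 3 + s ^ 2 * z + (d₁ * s ^ 3 - 1) = 0 := by
      have : z * (z ^ 3 + s ^ 2 * z + (d₁ * s ^ 3 - 1)) = 0 := by
        have := hz; rw [hθ] at this; simp only at this; linear_combination this
      rcases mul_eq_zero.mp this with h | h
      · exact absurd h hz0
      · exact h
    have hzt : z = s * (z * s⁻¹) := by field_simp
    have hprod : s ^ 3 * ((z * s⁻¹) ^ 3 + (z * s⁻¹) + d₂) = 0 := by
      rw [hzt] at hz3
      linear_combination hz3 + hs3e + (1 - s ^ 3 * d₁) * htwo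
    have hsol : (z * s⁻¹) ^ 3 + (z * s⁻¹) + d₂ = 0 := by
      rcases mul_eq_zero.mp hprod with h | h
      · exact absurd (pow_eq_zero_iff (by norm_num) |>.mp h) hs0
      · exact h
    exact hmiss₂ (z * s⁻¹) (by
      show (z * s⁻¹) ^ 3 + (z * s⁻¹) = d₂
      linear_combination hsol - d₂ * htwo)
  -- θ is an orthomorphism
  have hθbij : Function.Bijective θ := by
    rw [← Finite.injective_iff_bijective]
    intro x y h
    have hz : θ (x + y) = 0 := by
      rw [hadd, h]
      linear_combination (θ y) * htwo
    have := hker _ hz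
    linear_combination this - y * htwo
  have hψbij : Function.Bijective (fun x : F => θ x - x) := by
    rw [← Finite.injective_iff_bijective]
    intro x y h
    simp only at h
    have hz : θ (x + y) - (x + y) = 0 := by
      rw [hadd]
      linear_combination h + (θ y - y) * htwo
    have := hker' _ hz
    linear_combination this - y * htwo
  have horth : IsOrthomorphism θ := ⟨hθbij, hψbij⟩
  refine ⟨θ, horth, ?_⟩
  intro g
  have htrans : (fun x => θ (x + g) - θ g) = θ := by
    funext x
    rw [hadd]
    ring
  rw [htrans]
  constructor
  · refine ⟨horth, hθ0, ?_⟩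
    rintro x y hx hy ⟨z, hz⟩
    have hzne : z ≠ 0 := by
      intro h
      rw [h, zero_pow (by omega), zero_mul] at hz
      exact hx hz
    rw [FiniteField.pow_card_sub_one_eq_one z hzne, one_mul] at hz
    rw [hz]
  · intro ℓ hlt hdvd hcyc
    have hl0 : ℓ ≠ 0 := by
      rintro rfl
      rw [Nat.zero_dvd] at hdvd
      omega
    obtain ⟨g₀, hg₀⟩ := IsCyclic.exists_generator (α := Fˣ)
    have hord : orderOf g₀ = Fintype.card F - 1 := by
      rw [orderOf_eq_card_of_forall_mem_zpowers hg₀, Nat.card_eq_fintype_card, Fintype.card_units]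
    set h : F := ((g₀ : F)) ^ ℓ with hh
    have hh0 : h ≠ 0 := pow_ne_zero _ (Units.ne_zero g₀)
    have hh1 : h ≠ 1 := by
      intro h1
      have hu1 : (g₀ ^ ℓ : Fˣ) = 1 := by
        ext
        push_cast
        exact h1
      have hdvd' := orderOf_dvd_of_pow_eq_one hu1
      rw [hord] at hdvd'
      have := Nat.le_of_dvd (Nat.pos_of_ne_zero hl0) hdvd'
      omega
    obtain ⟨_, _, hcc⟩ := hcyc
    have key : ∀ y : F, y ≠ 0 → θ (h * y) = h * θ y := by
      intro y hy
      have := hcc (h * y) y (mul_ne_zero hh0 hy) hy ⟨(g₀ : F), by rw [hh]⟩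
      have h2 : θ (h * y) * y = (h * θ y) * y := by linear_combination this
      exact mul_right_cancel₀ hy h2
    have e1 := key 1 one_ne_zero
    have e2 := key w₀ hw0
    rw [hθ] at e1 e2
    simp only at e1 e2
    have hAB : h ^ 4 - h + s ^ 2 * (h ^ 2 - h) = 0 := by linear_combination e1
    have hAB2 : (h ^ 4 - h) * w₀ ^ 4 + s ^ 2 * (h ^ 2 - h) * w₀ ^ 2 = 0 := by
      linear_combination e2
    have hfinal : (h ^ 4 - h) * (w₀ ^ 4 - w₀ ^ 2) = 0 := by
      linear_combination hAB2 - w₀ ^ 2 * hAB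
    have hw4 : w₀ ^ 4 - w₀ ^ 2 ≠ 0 := by
      intro hcontra
      apply hw01
      have : (w₀ ^ 2) ^ 2 = w₀ ^ 2 := by linear_combination hcontra
      have hww : w₀ ^ 2 = w₀ := by
        apply hsqinj
        calc (w₀ ^ 2) ^ 2 = w₀ ^ 2 := this
          _ = (w₀) ^ 2 := by ring
      linear_combination hww
    have hA : h ^ 4 - h = 0 := by
      rcases mul_eq_zero.mp hfinal with h' | h'
      · exact h'
      · exact absurd h' hw4
    rcases h4 h (by linear_combination hA) with h' | h'
    · exact hh0 h'
    · exact hh1 h'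
end

section
/- Let q be a prime power and k > 2 an integer with q ≡ 1 (mod k). Then the number of orthomorphisms over F_q is at least 2^{(q−1)/k}. -/
open Classical in
/-- The family of candidate orthomorphisms: multiply by `a` or `b` depending on the
value of `x ^ k` (i.e. on the coset of the `k`-th roots of unity). -/
noncomputable def thetaMap {F : Type*} [Field F] (k : ℕ) (a b : F)
    (ε : (powMonoidHom k : Fˣ →* Fˣ).range → Bool) (x : F) : F :=
  if hx : x = 0 then 0
  else (if ε ⟨Units.mk0 x hx ^ k, ⟨Units.mk0 x hx, rfl⟩⟩ then a else b) * x

lemma thetaMap_zero {F : Type*} [Field F] (k : ℕ) (a b : F)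
    (ε : (powMonoidHom k : Fˣ →* Fˣ).range → Bool) : thetaMap k a b ε 0 = 0 := by
  simp [thetaMap]

lemma thetaMap_ne {F : Type*} [Field F] (k : ℕ) (a b : F)
    (ε : (powMonoidHom k : Fˣ →* Fˣ).range → Bool) (x : F) (hx : x ≠ 0) :
    thetaMap k a b ε x
      = (if ε ⟨Units.mk0 x hx ^ k, ⟨Units.mk0 x hx, rfl⟩⟩ then a else b) * x := by
  simp [thetaMap, hx]

/-- Theorem 4.7.  If `q ≡ 1 (mod k)` for some `k > 2`, then `F_q` has at least
`2^((q-1)/k)` orthomorphisms. -/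
theorem thm_explowbnd {F : Type*} [Field F] [Fintype F]
    (k : ℕ) (hk : 2 < k) (hdvd : k ∣ Fintype.card F - 1) :
    2 ^ ((Fintype.card F - 1) / k) ≤ {θ : F → F | IsOrthomorphism θ}.ncard := by
  classical
  set q := Fintype.card F with hq
  have hk0 : 0 < k := by omega
  have hcardu : Nat.card Fˣ = q - 1 := by
    rw [Nat.card_eq_fintype_card, Fintype.card_units]
  have hq2 : 2 ≤ q := Fintype.one_lt_card
  -- get an element of order k in Fˣ
  obtain ⟨g, hg⟩ : ∃ g : Fˣ, orderOf g = k := by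
    obtain ⟨z, hz⟩ := IsCyclic.exists_ofOrder_eq_natCard (α := Fˣ)
    rw [hcardu] at hz
    refine ⟨z ^ ((q - 1) / k), ?_⟩
    rw [← hz] at hdvd ⊢
    exact orderOf_pow_orderOf_div (by rw [hz]; omega) hdvd
  set ψ : Fˣ →* Fˣ := powMonoidHom k with hψ
  -- the kernel of the k-th power map has exactly k elements
  have hker : Nat.card ψ.ker = k := by
    have h1 : k ∣ Nat.card ψ.ker := by
      have hle : Subgroup.zpowers g ≤ ψ.ker := by
        rw [Subgroup.zpowers_le]
        simp [MonoidHom.mem_ker, hψ, powMonoidHom_apply, ← hg, pow_orderOf_eq_one]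
      have : Nat.card (Subgroup.zpowers g) = k := by rw [Nat.card_zpowers, hg]
      exact this ▸ Subgroup.card_dvd_of_le hle
    have h2 : Nat.card ψ.ker ∣ k := by
      obtain ⟨w, hword⟩ := IsCyclic.exists_ofOrder_eq_natCard (α := ψ.ker)
      rw [← hword]
      have hw : (w : Fˣ) ^ k = 1 := MonoidHom.mem_ker.mp w.2
      have : orderOf w = orderOf (w : Fˣ) :=
        (orderOf_injective ψ.ker.subtype (Subgroup.subtype_injective _) w).symm
      rw [this]
      exact orderOf_dvd_of_pow_eq_one hw
    exact Nat.dvd_antisymm h2 h1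
  -- hence the range has (q-1)/k elements
  have hrange : Nat.card ψ.range * k = q - 1 := by
    have h1 := Subgroup.card_eq_card_quotient_mul_card_subgroup ψ.ker
    have h2 : Nat.card (Fˣ ⧸ ψ.ker) = Nat.card ψ.range :=
      Nat.card_congr (QuotientGroup.quotientKerEquivRange ψ).toEquiv
    rw [h2, hker] at h1
    rw [← h1, hcardu]
  have hcardrange : Nat.card ψ.range = (q - 1) / k := by
    rw [← hrange, Nat.mul_div_cancel _ hk0]
  -- construct the elements a and b
  have hg1 : g ≠ 1 := by
    intro h; rw [h, orderOf_one] at hg; omega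
  have hgk : (g : F) ^ k = 1 := by
    have : g ^ k = 1 := by rw [← hg]; exact pow_orderOf_eq_one g
    simpa using congrArg (Units.val) this
  set h : F := (g : F) with hhdef
  set c : F := (g : F) ^ 2 with hcdef
  have hh1 : h ≠ 1 := by
    intro hcontra
    exact hg1 (Units.ext (by rw [Units.val_one]; exact hcontra))
  have hc1 : c ≠ 1 := by
    intro hcontra
    have h2 : g ^ 2 = 1 := Units.ext (by
      rw [Units.val_pow_eq_pow_val, Units.val_one]; exact hcontra)
    have h3 := orderOf_dvd_of_pow_eq_one h2
    rw [hg] at h3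
    have := Nat.le_of_dvd (by norm_num) h3
    omega
  have hch : c ≠ h := by
    intro hcontra
    have : (g:F) * (g:F) = (g:F) * 1 := by rw [mul_one, ← sq]; exact hcontra
    exact hh1 (mul_left_cancel₀ (Units.ne_zero g) this)
  have hck : c ^ k = 1 := by
    rw [hcdef, ← pow_mul, mul_comm, pow_mul, hgk, one_pow]
  have hch0 : c - h ≠ 0 := sub_ne_zero_of_ne hch
  have hc10 : c - 1 ≠ 0 := sub_ne_zero_of_ne hc1
  have hh0 : h ≠ 0 := Units.ne_zero g
  set b : F := (c - 1) / (c - h) with hbdef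
  set a : F := b * h with hadef
  have hb0 : b ≠ 0 := div_ne_zero hc10 hch0
  have ha0 : a ≠ 0 := mul_ne_zero hb0 hh0
  have hb1 : b ≠ 1 := by
    intro hcontra
    rw [hbdef, div_eq_one_iff_eq hch0] at hcontra
    exact hh1 (by linear_combination hcontra)
  have haux : a - 1 = c * (b - 1) := by
    rw [hadef, hbdef]
    field_simp
    ring
  have hcnz : c ≠ 0 := by
    intro h0
    rw [h0, zero_pow (by omega : k ≠ 0)] at hck
    exact zero_ne_one hck
  have ha1 : a ≠ 1 := by
    intro hcontra
    rw [hcontra] at haux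
    simp only [sub_self] at haux
    exact (mul_ne_zero hcnz (sub_ne_zero_of_ne hb1)) haux.symm
  have hab : a ≠ b := by
    intro hcontra
    rw [hadef] at hcontra
    exact hh1 (by
      have := hcontra
      nth_rewrite 2 [← mul_one b] at this
      exact mul_left_cancel₀ hb0 this)
  have hpowab : a ^ k = b ^ k := by
    rw [hadef, mul_pow, hgk, mul_one]
  have hpowab1 : (a - 1) ^ k = (b - 1) ^ k := by
    rw [haux, mul_pow, hck, one_mul]
  -- the injection
  -- coefficient facts
  have coeff_facts : ∀ (t : Bool), (if t then a else b) ≠ 0 ∧ (if t then a else b) ≠ 1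
      ∧ (if t then a else b) ^ k = a ^ k ∧ ((if t then a else b) - 1) ^ k = (a - 1) ^ k := by
    intro t; cases t <;> simp [ha0, hb0, ha1, hb1, hpowab, hpowab1]
  -- each Φ ε is an orthomorphism
  have hmem : ∀ ε, IsOrthomorphism (thetaMap k a b ε) := by
    intro ε
    constructor
    · rw [Finite.injective_iff_bijective.symm]
      intro x y hxy
      by_cases hx : x = 0 <;> by_cases hy : y = 0
      · rw [hx, hy]
      · exfalso
        rw [hx, thetaMap_zero, thetaMap_ne k a b ε y hy] at hxy
        exact (mul_ne_zero (coeff_facts _).1 hy) hxy.symm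
      · exfalso
        rw [hy, thetaMap_zero, thetaMap_ne k a b ε x hx] at hxy
        exact (mul_ne_zero (coeff_facts _).1 hx) hxy
      · rw [thetaMap_ne k a b ε x hx, thetaMap_ne k a b ε y hy] at hxy
        set px : ψ.range := ⟨Units.mk0 x hx ^ k, ⟨Units.mk0 x hx, rfl⟩⟩ with hpx
        set py : ψ.range := ⟨Units.mk0 y hy ^ k, ⟨Units.mk0 y hy, rfl⟩⟩ with hpy
        have hxk : x ^ k = y ^ k := by
          have h1 := congrArg (· ^ k) hxy
          simp only [mul_pow] at h1
          rw [(coeff_facts (ε px)).2.2.1, (coeff_facts (ε py)).2.2.1] at h1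
          exact mul_left_cancel₀ (pow_ne_zero k ha0) h1
        have hpxy : px = py := by
          rw [hpx, hpy]
          ext
          push_cast
          exact hxk
        rw [hpxy] at hxy
        exact mul_left_cancel₀ (coeff_facts (ε py)).1 hxy
    · rw [Finite.injective_iff_bijective.symm]
      intro x y hxy
      simp only at hxy
      by_cases hx : x = 0 <;> by_cases hy : y = 0
      · rw [hx, hy]
      · exfalso
        rw [hx, thetaMap_zero, thetaMap_ne k a b ε y hy] at hxy
        have h0 : ((if ε ⟨Units.mk0 y hy ^ k, ⟨Units.mk0 y hy, rfl⟩⟩ then a else b) - 1) * y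
            = 0 := by linear_combination -hxy
        exact (mul_ne_zero (sub_ne_zero_of_ne (coeff_facts _).2.1) hy) h0
      · exfalso
        rw [hy, thetaMap_zero, thetaMap_ne k a b ε x hx] at hxy
        have h0 : ((if ε ⟨Units.mk0 x hx ^ k, ⟨Units.mk0 x hx, rfl⟩⟩ then a else b) - 1) * x
            = 0 := by linear_combination hxy
        exact (mul_ne_zero (sub_ne_zero_of_ne (coeff_facts _).2.1) hx) h0
      · rw [thetaMap_ne k a b ε x hx, thetaMap_ne k a b ε y hy] at hxy
        set px : ψ.range := ⟨Units.mk0 x hx ^ k, ⟨Units.mk0 x hx, rfl⟩⟩ with hpx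
        set py : ψ.range := ⟨Units.mk0 y hy ^ k, ⟨Units.mk0 y hy, rfl⟩⟩ with hpy
        have hxy' : ((if ε px then a else b) - 1) * x = ((if ε py then a else b) - 1) * y := by
          linear_combination hxy
        have hxk : x ^ k = y ^ k := by
          have h1 := congrArg (· ^ k) hxy'
          simp only [mul_pow] at h1
          rw [(coeff_facts (ε px)).2.2.2, (coeff_facts (ε py)).2.2.2] at h1
          exact mul_left_cancel₀ (pow_ne_zero k (sub_ne_zero_of_ne ha1)) h1
        have hpxy : px = py := by
          rw [hpx, hpy]
          ext
          push_cast
          exact hxk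
        rw [hpxy] at hxy'
        have := mul_left_cancel₀ (sub_ne_zero_of_ne (coeff_facts (ε py)).2.1) hxy'
        exact this
  -- Φ is injective
  have hinj : Function.Injective (thetaMap k a b (F := F)) := by
    intro ε ε' hεε'
    funext p
    obtain ⟨u, hu⟩ := MonoidHom.mem_range.mp p.2
    have hu0 : (u : F) ≠ 0 := Units.ne_zero u
    have heq := congrFun hεε' (u : F)
    rw [thetaMap_ne k a b ε _ hu0, thetaMap_ne k a b ε' _ hu0] at heq
    have hmk : Units.mk0 (u : F) hu0 = u := Units.ext rfl
    have hidx : (⟨Units.mk0 (u : F) hu0 ^ k, ⟨Units.mk0 (u : F) hu0, rfl⟩⟩ : ψ.range) = p := by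
      apply Subtype.ext
      rw [hmk]
      exact hu
    rw [hidx] at heq
    have h2 := mul_right_cancel₀ hu0 heq
    cases h3 : ε p <;> cases h4 : ε' p
    · rfl
    · rw [h3, h4] at h2
      simp only [Bool.false_eq_true, if_false, if_true] at h2
      exact absurd h2.symm hab
    · rw [h3, h4] at h2
      simp only [Bool.false_eq_true, if_false, if_true] at h2
      exact absurd h2 hab
    · rfl
  -- conclude
  have hsub : Set.range (thetaMap k a b (F := F)) ⊆ {θ : F → F | IsOrthomorphism θ} := by
    rintro _ ⟨ε, rfl⟩
    exact hmem ε
  calc 2 ^ ((q - 1) / k) = Nat.card (↥ψ.range → Bool) := by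
        rw [Nat.card_fun, Nat.card_eq_fintype_card (α := Bool)]
        rw [hcardrange]
        norm_num
    _ = Nat.card (Set.range (thetaMap k a b (F := F))) := (Nat.card_range_of_injective hinj).symm
    _ = (Set.range (thetaMap k a b (F := F))).ncard := (Nat.card_coe_set_eq _)
    _ ≤ _ := Set.ncard_le_ncard hsub (Set.toFinite _)
end
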